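/- arXiv:1210.6380 — 3 statements merged into one kernel-verified Lean document; each statement's English description precedes it below -/
import Mathlib

section
/- Let G be an infinite 2-connected finitely separable graph, let M be a matroid on the edge set of G whose circuits are exactly the edge sets of (finite) cycles of G, let ℓ ≥ 1 be an integer, and let (X,Y) be an ℓ-separation of M with Y infinite such that c(X) + c(Y) is minimal among all ℓ-separations of M. Then the subgraph (V[Y], Y) is connected. -/
open scoped Matroid

variable {V : Type*} {α : Type*}

/-- The set of vertices incident with an edge in `X`. -/
def vertsOf (X : Set (Sym2 V)) : Set V := {v | ∃ e ∈ X, v ∈ e}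

/-- A graph is finitely separable if any two distinct vertices can be separated by deleting
finitely many edges. -/
def FinitelySeparable (G : SimpleGraph V) : Prop :=
  ∀ u v : V, u ≠ v → ∃ F : Set (Sym2 V), F.Finite ∧ ¬ (G.deleteEdges F).Reachable u v

/-- `C` is the edge set of a (finite) cycle of `G`. -/
def IsCycleEdgeSet (G : SimpleGraph V) (C : Set (Sym2 V)) : Prop :=
  ∃ (v : V) (w : G.Walk v v), w.IsCycle ∧ C = {e | e ∈ w.edges}

/-- `M` is the finite-cycle matroid of `G` : its ground set is the edge set of `G` and a set
of edges is independent iff it contains no edge set of a cycle of `G` (equivalently, the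
circuits of `M` are precisely the edge sets of cycles of `G`). -/
def IsFiniteCycleMatroid (G : SimpleGraph V) (M : Matroid (Sym2 V)) : Prop :=
  M.E = G.edgeSet ∧
    ∀ I, M.Indep I ↔ I ⊆ G.edgeSet ∧ ∀ C, IsCycleEdgeSet G C → ¬ C ⊆ I

/-- `F` arises in the definition of the connectivity function `κ_M(X)`: there are a base `B`
of `M|X` and a base `B'` of `M|(E \ X)` with `F ⊆ B ∪ B'` and `(B ∪ B') \ F` a base of `M`;
the connectivity `κ_M(X)` is then `F.encard`. -/
def ConnWitness (M : Matroid α) (X F : Set α) : Prop :=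
  ∃ B B', (M ↾ X).IsBase B ∧ (M ↾ (M.E \ X)).IsBase B' ∧
    F ⊆ B ∪ B' ∧ M.IsBase ((B ∪ B') \ F)

/-- The (vertex sets of the) connected components of the subgraph `(V[X], X)`. -/
def components (X : Set (Sym2 V)) : Set (Set V) :=
  {C | ∃ v ∈ vertsOf X, C = {w | (SimpleGraph.fromEdgeSet X).Reachable v w}}

/-- The subgraph `(V[X], X)` is connected (in particular nonempty). -/
def SubConnected (X : Set (Sym2 V)) : Prop :=
  (vertsOf X).Nonempty ∧
    ∀ u ∈ vertsOf X, ∀ w ∈ vertsOf X, (SimpleGraph.fromEdgeSet X).Reachable u w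

/-- The edges of `X` lying inside the vertex set `K`. -/
def edgesIn (X : Set (Sym2 V)) (K : Set V) : Set (Sym2 V) :=
  {e | e ∈ X ∧ ∀ v ∈ e, v ∈ K}

/-- `G` is 2-connected: connected, more than two vertices, and still connected after
deleting any one vertex. -/
def TwoConnected (G : SimpleGraph V) : Prop :=
  G.Connected ∧ 2 < (Set.univ : Set V).encard ∧
    ∀ v : V, (G.induce ({v}ᶜ : Set V)).Connected

/-- An `ℓ`-Tutte-separation of `G`: a partition `(X, Y)` of the edge set with at least `ℓ`
edges on each side and at most `ℓ` vertices incident both with an edge of `X` and with an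
edge of `Y`. -/
def TutteSep (G : SimpleGraph V) (ℓ : ℕ) (X Y : Set (Sym2 V)) : Prop :=
  X ∪ Y = G.edgeSet ∧ Disjoint X Y ∧ (ℓ : ℕ∞) ≤ X.encard ∧ (ℓ : ℕ∞) ≤ Y.encard ∧
    (vertsOf X ∩ vertsOf Y).encard ≤ (ℓ : ℕ∞)

/-- `G` is `k`-Tutte-connected: it has no `ℓ`-Tutte-separation for any `1 ≤ ℓ < k`. -/
def TutteConnected (G : SimpleGraph V) (k : ℕ) : Prop :=
  ∀ ℓ : ℕ, 1 ≤ ℓ → ℓ < k → ∀ X Y : Set (Sym2 V), ¬ TutteSep G ℓ X Y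

/-- An `ℓ`-separation of the matroid `M`: a partition `(X, Y)` of the ground set with at
least `ℓ` elements on each side and `κ_M(X) ≤ ℓ - 1`. -/
def MatSep (M : Matroid α) (ℓ : ℕ) (X Y : Set α) : Prop :=
  X ∪ Y = M.E ∧ Disjoint X Y ∧ (ℓ : ℕ∞) ≤ X.encard ∧ (ℓ : ℕ∞) ≤ Y.encard ∧
    ∀ F, ConnWitness M X F → F.encard + 1 ≤ (ℓ : ℕ∞)

/-- `M` is `k`-connected: it has no `ℓ`-separation for any `1 ≤ ℓ < k`. -/
def MatConnected (M : Matroid α) (k : ℕ) : Prop :=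
  ∀ ℓ : ℕ, 1 ≤ ℓ → ℓ < k → ∀ X Y : Set α, ¬ MatSep M ℓ X Y
open SimpleGraph Set
open scoped symmDiff
set_option linter.unusedSectionVars false

section Aux

variable [DecidableEq V] {G : SimpleGraph V}

/-- degree of a vertex in a finite edge set -/
def edeg (Z : Finset (Sym2 V)) (v : V) : ℕ := (Z.filter (fun e => v ∈ e)).card

lemma sym2_setOf_mem_finite (e : Sym2 V) : {x : V | x ∈ e}.Finite := by
  induction e using Sym2.ind with
  | _ a b =>
    refine ((Set.finite_singleton b).insert a).subset ?_
    intro x hx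
    rcases Sym2.mem_iff.1 hx with h | h <;> simp [h]

lemma vertsOf_finite (Z : Finset (Sym2 V)) : (vertsOf (Z : Set (Sym2 V))).Finite := by
  have h : vertsOf (Z : Set (Sym2 V)) ⊆ ⋃ e ∈ (Z : Set (Sym2 V)), {x : V | x ∈ e} := by
    rintro v ⟨e, he, hv⟩
    exact Set.mem_biUnion he hv
  exact (Set.Finite.biUnion Z.finite_toSet fun e _ => sym2_setOf_mem_finite e).subset h

lemma vertsOf_mono {A B : Set (Sym2 V)} (h : A ⊆ B) : vertsOf A ⊆ vertsOf B := by
  rintro v ⟨e, he, hv⟩; exact ⟨e, h he, hv⟩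

lemma vertsOf_union (A B : Set (Sym2 V)) : vertsOf (A ∪ B) = vertsOf A ∪ vertsOf B := by
  ext v
  constructor
  · rintro ⟨e, he | he, hv⟩
    · exact Or.inl ⟨e, he, hv⟩
    · exact Or.inr ⟨e, he, hv⟩
  · rintro (⟨e, he, hv⟩ | ⟨e, he, hv⟩)
    · exact ⟨e, Or.inl he, hv⟩
    · exact ⟨e, Or.inr he, hv⟩

lemma countP_eq_edeg (l : List (Sym2 V)) (hl : l.Nodup) (x : V) :
    l.countP (fun e => x ∈ e) = edeg l.toFinset x := by
  rw [List.countP_eq_length_filter]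
  unfold edeg
  rw [← List.toFinset_card_of_nodup (hl.filter _), List.toFinset_filter]
  congr 1
  apply Finset.filter_congr
  intro e _
  simp

lemma edeg_parity_symmDiff (Z₁ Z₂ : Finset (Sym2 V)) (v : V) :
    edeg (Z₁ ∆ Z₂) v % 2 = (edeg Z₁ v + edeg Z₂ v) % 2 := by
  unfold edeg
  have hfilter : (Z₁ ∆ Z₂).filter (fun e => v ∈ e)
      = (Z₁.filter (fun e => v ∈ e)) ∆ (Z₂.filter (fun e => v ∈ e)) := by
    ext g
    simp only [Finset.mem_filter, Finset.mem_symmDiff]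
    tauto
  rw [hfilter]
  set A := Z₁.filter (fun e => v ∈ e)
  set B := Z₂.filter (fun e => v ∈ e)
  have hdisj : Disjoint (A ∆ B) (A ∩ B) := by
    rw [Finset.disjoint_left]
    intro g hg hg'
    simp only [Finset.mem_symmDiff] at hg
    simp only [Finset.mem_inter] at hg'
    tauto
  have hcover : (A ∆ B) ∪ (A ∩ B) = A ∪ B := by
    ext g
    simp only [Finset.mem_union, Finset.mem_symmDiff, Finset.mem_inter]
    tauto
  have h1 : (A ∆ B).card + (A ∩ B).card = (A ∪ B).card := by
    rw [← Finset.card_union_of_disjoint hdisj, hcover]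
  have h2 := Finset.card_union_add_card_inter A B
  omega

lemma edeg_union_of_disjoint {Z₁ Z₂ : Finset (Sym2 V)} (h : Disjoint Z₁ Z₂) (v : V) :
    edeg (Z₁ ∪ Z₂) v = edeg Z₁ v + edeg Z₂ v := by
  unfold edeg
  rw [Finset.filter_union]
  exact Finset.card_union_of_disjoint (Finset.disjoint_filter_filter h)

lemma isCycle_even_edeg {v : V} {w : G.Walk v v} (hw : w.IsCycle) (x : V) :
    Even (edeg w.edges.toFinset x) := by
  have h := (hw.isTrail.even_countP_edges_iff x).2 (fun h => absurd rfl h)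
  rwa [countP_eq_edeg _ hw.isTrail.edges_nodup] at h

lemma cycleEdgeSet_even_edeg {Z : Finset (Sym2 V)} (h : IsCycleEdgeSet G (Z : Set (Sym2 V))) (x : V) :
    Even (edeg Z x) := by
  obtain ⟨v, w, hw, hC⟩ := h
  have hZ : Z = w.edges.toFinset := by
    apply Finset.coe_injective
    rw [hC]
    ext e
    simp
  rw [hZ]
  exact isCycle_even_edeg hw x

lemma cycleEdgeSet_nonempty {Z : Finset (Sym2 V)} (h : IsCycleEdgeSet G (Z : Set (Sym2 V))) :
    Z.Nonempty := by
  obtain ⟨v, w, hw, hC⟩ := h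
  cases w with
  | nil => exact absurd rfl hw.ne_nil
  | @cons _ v' _ hadj w' =>
    have h2 : s(v, v') ∈ (Z : Set (Sym2 V)) := by rw [hC]; simp
    exact ⟨_, h2⟩

lemma edges_mapLe {G' : SimpleGraph V} (h : G ≤ G') {u v : V} (p : G.Walk u v) :
    (p.mapLe h).edges = p.edges := by
  induction p with
  | nil => rfl
  | cons hadj p ih => simp [Walk.mapLe, Walk.edges_map] at ih ⊢

/-- Key extraction lemma: a nonempty finite edge set in which every vertex has even degree
contains the edge set of a cycle. -/
lemma exists_cycle_of_even (Z : Finset (Sym2 V)) (hZE : (Z : Set (Sym2 V)) ⊆ G.edgeSet)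
    (hne : Z.Nonempty) (hev : ∀ x, Even (edeg Z x)) :
    ∃ (v : V) (w : G.Walk v v), w.IsCycle ∧ {e | e ∈ w.edges} ⊆ (Z : Set (Sym2 V)) := by
  classical
  set H : SimpleGraph V := SimpleGraph.fromEdgeSet (Z : Set (Sym2 V)) with hH
  have hHG : H ≤ G := by
    rw [hH, ← SimpleGraph.fromEdgeSet_edgeSet (G := G)]
    exact SimpleGraph.fromEdgeSet_mono hZE
  have hHedges : H.edgeSet ⊆ (Z : Set (Sym2 V)) := by
    rw [hH, SimpleGraph.edgeSet_fromEdgeSet]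
    exact Set.diff_subset
  obtain ⟨e₀, he₀⟩ := hne
  induction e₀ using Sym2.ind with
  | _ a b =>
  have hab : a ≠ b := by
    intro h
    subst h
    exact (G.not_isDiag_of_mem_edgeSet (hZE he₀)) (by simp)
  have hadj : H.Adj a b := by
    rw [hH, SimpleGraph.fromEdgeSet_adj]
    exact ⟨he₀, hab⟩
  set S : Set ℕ := {n | ∃ (c : V) (t : H.Walk a c), t.IsTrail ∧ t.length = n} with hS
  have h1 : 1 ∈ S := ⟨b, Walk.cons hadj Walk.nil, by simp [Walk.isTrail_def], by simp⟩
  have hBdd : BddAbove S := by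
    refine ⟨Z.card, ?_⟩
    rintro n ⟨c, t, ht, rfl⟩
    have h2 : t.edges.toFinset ⊆ Z := by
      intro g hg
      exact hHedges (t.edges_subset_edgeSet (List.mem_toFinset.1 hg))
    calc t.length = t.edges.length := (Walk.length_edges t).symm
      _ = t.edges.toFinset.card := (List.toFinset_card_of_nodup ht.edges_nodup).symm
      _ ≤ Z.card := Finset.card_le_card h2
  obtain ⟨c, t, ht, htlen⟩ := Nat.sSup_mem ⟨1, h1⟩ hBdd
  have hlen1 : 1 ≤ t.length := htlen ▸ le_csSup hBdd h1
  have hca : c = a := by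
    by_contra hca
    have hodd : ¬ Even (edeg t.edges.toFinset c) := by
      rw [← countP_eq_edeg _ ht.edges_nodup]
      intro hEv
      exact ((ht.even_countP_edges_iff c).1 hEv (fun h => hca h.symm)).2 rfl
    have hsub : t.edges.toFinset.filter (fun e => c ∈ e) ⊆ Z.filter (fun e => c ∈ e) := by
      intro g hg
      simp only [Finset.mem_filter, List.mem_toFinset] at hg ⊢
      exact ⟨hHedges (t.edges_subset_edgeSet hg.1), hg.2⟩
    have hne2 : t.edges.toFinset.filter (fun e => c ∈ e) ≠ Z.filter (fun e => c ∈ e) := by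
      intro h
      apply hodd
      unfold edeg
      rw [h]
      exact hev c
    obtain ⟨g, hgZ, hgt⟩ := Finset.exists_of_ssubset (hsub.ssubset_of_ne hne2)
    simp only [Finset.mem_filter] at hgZ
    have hgt' : g ∉ t.edges := fun h =>
      hgt (Finset.mem_filter.2 ⟨List.mem_toFinset.2 h, hgZ.2⟩)
    obtain ⟨d, rfl⟩ := Sym2.mem_iff_exists.1 hgZ.2
    have hcd : H.Adj c d := by
      rw [hH, SimpleGraph.fromEdgeSet_adj]
      refine ⟨hgZ.1, ?_⟩
      intro h
      subst h
      exact (G.not_isDiag_of_mem_edgeSet (hZE hgZ.1)) (by simp)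
    have hmem : t.length + 1 ∈ S := by
      refine ⟨d, t.concat hcd, ?_, by rw [Walk.length_concat]⟩
      rw [Walk.isTrail_def, Walk.edges_concat, List.concat_eq_append]
      refine ht.edges_nodup.append (List.nodup_singleton _) ?_
      intro x hx hx2
      rw [List.mem_singleton] at hx2
      exact hgt' (hx2 ▸ hx)
    have := le_csSup hBdd hmem
    omega
  subst hca
  rcases t with _ | ⟨hadj2, r⟩
  · exact absurd hlen1 (by simp)
  · rename_i b'
    rw [Walk.isTrail_cons] at ht
    have hp := r.bypass_isPath
    have hne3 : s(c, b') ∉ r.bypass.edges := fun h => ht.2 (r.edges_bypass_subset h)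
    have hcyc : (Walk.cons hadj2 r.bypass).IsCycle :=
      (Walk.cons_isCycle_iff _ _).2 ⟨hp, hne3⟩
    refine ⟨c, (Walk.cons hadj2 r.bypass).mapLe hHG, hcyc.mapLe _, ?_⟩
    intro g hg
    rw [Set.mem_setOf_eq, edges_mapLe] at hg
    exact hHedges ((Walk.cons hadj2 r.bypass).edges_subset_edgeSet hg)

end Aux

section MatroidAux

variable [DecidableEq V] {G : SimpleGraph V} {M : Matroid (Sym2 V)}

lemma coe_toFinset_edges {v v' : V} (w : G.Walk v v') :
    (↑(w.edges.toFinset) : Set (Sym2 V)) = {e | e ∈ w.edges} := by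
  ext e; simp

lemma indep_no_cycle_subset (hM : ∀ I, M.Indep I ↔ I ⊆ G.edgeSet ∧ ∀ C, IsCycleEdgeSet G C → ¬ C ⊆ I)
    {I : Set (Sym2 V)} (hI : M.Indep I) {Z : Finset (Sym2 V)}
    (hcyc : IsCycleEdgeSet G (Z : Set (Sym2 V))) (hsub : (Z : Set (Sym2 V)) ⊆ I) : False :=
  ((hM I).1 hI).2 _ hcyc hsub

lemma dep_has_cycle (hM : ∀ I, M.Indep I ↔ I ⊆ G.edgeSet ∧ ∀ C, IsCycleEdgeSet G C → ¬ C ⊆ I)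
    {S : Set (Sym2 V)} (hS : S ⊆ G.edgeSet) (hdep : ¬ M.Indep S) :
    ∃ Z : Finset (Sym2 V), IsCycleEdgeSet G (Z : Set (Sym2 V)) ∧ (Z : Set (Sym2 V)) ⊆ S := by
  rw [hM S] at hdep
  push_neg at hdep
  obtain ⟨C, hC, hCS⟩ := hdep hS
  obtain ⟨v, w, hw, hCe⟩ := hC
  refine ⟨w.edges.toFinset, ?_, ?_⟩
  · rw [coe_toFinset_edges]
    exact ⟨v, w, hw, rfl⟩
  · rw [coe_toFinset_edges, ← hCe]
    exact hCS

lemma indep_even_empty (hM : ∀ I, M.Indep I ↔ I ⊆ G.edgeSet ∧ ∀ C, IsCycleEdgeSet G C → ¬ C ⊆ I)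
    {I : Set (Sym2 V)} (hI : M.Indep I) {Z : Finset (Sym2 V)}
    (hsub : (Z : Set (Sym2 V)) ⊆ I) (hev : ∀ x, Even (edeg Z x)) : Z = ∅ := by
  by_contra hne
  have hZE : (Z : Set (Sym2 V)) ⊆ G.edgeSet := hsub.trans ((hM I).1 hI).1
  obtain ⟨v, w, hw, hwZ⟩ := exists_cycle_of_even Z hZE (Finset.nonempty_of_ne_empty hne) hev
  refine indep_no_cycle_subset hM hI (Z := w.edges.toFinset) ?_ ?_
  · rw [coe_toFinset_edges]
    exact ⟨v, w, hw, rfl⟩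
  · rw [coe_toFinset_edges]
    exact fun g hg => hsub (hwZ hg)

lemma base_fund (hM : ∀ I, M.Indep I ↔ I ⊆ G.edgeSet ∧ ∀ C, IsCycleEdgeSet G C → ¬ C ⊆ I)
    (hE : M.E = G.edgeSet) {B : Set (Sym2 V)} (hB : M.IsBase B) {g : Sym2 V}
    (hg : g ∈ M.E) (hgB : g ∉ B) :
    ∃ Z : Finset (Sym2 V), IsCycleEdgeSet G (Z : Set (Sym2 V)) ∧ g ∈ Z ∧
      (Z : Set (Sym2 V)) ⊆ insert g B := by
  have hdep := (hB.insert_dep ⟨hg, hgB⟩).not_indep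
  have hsubE : insert g B ⊆ G.edgeSet := by
    rw [← hE]
    exact Set.insert_subset hg hB.subset_ground
  obtain ⟨Z, hZcyc, hZsub⟩ := dep_has_cycle hM hsubE hdep
  refine ⟨Z, hZcyc, ?_, hZsub⟩
  by_contra hgZ
  have hZB : (Z : Set (Sym2 V)) ⊆ B := by
    intro z hz
    rcases hZsub hz with h | h
    · exact absurd (h ▸ hz) hgZ
    · exact h
  exact indep_no_cycle_subset hM hB.indep hZcyc hZB

lemma basis_fund (hM : ∀ I, M.Indep I ↔ I ⊆ G.edgeSet ∧ ∀ C, IsCycleEdgeSet G C → ¬ C ⊆ I)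
    (hE : M.E = G.edgeSet) {B S : Set (Sym2 V)} (hB : M.IsBasis B S) {g : Sym2 V}
    (hg : g ∈ S) (hgB : g ∉ B) :
    ∃ Z : Finset (Sym2 V), IsCycleEdgeSet G (Z : Set (Sym2 V)) ∧ g ∈ Z ∧
      (Z : Set (Sym2 V)) ⊆ insert g B := by
  have hdep := (hB.insert_dep ⟨hg, hgB⟩).not_indep
  have hsubE : insert g B ⊆ G.edgeSet := by
    rw [← hE]
    exact Set.insert_subset (hB.subset_ground hg) (hB.indep.subset_ground)
  obtain ⟨Z, hZcyc, hZsub⟩ := dep_has_cycle hM hsubE hdep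
  refine ⟨Z, hZcyc, ?_, hZsub⟩
  by_contra hgZ
  have hZB : (Z : Set (Sym2 V)) ⊆ B := by
    intro z hz
    rcases hZsub hz with h | h
    · exact absurd (h ▸ hz) hgZ
    · exact h
  exact indep_no_cycle_subset hM hB.indep hZcyc hZB

lemma trace_inj (hM : ∀ I, M.Indep I ↔ I ⊆ G.edgeSet ∧ ∀ C, IsCycleEdgeSet G C → ¬ C ⊆ I)
    {U F : Set (Sym2 V)} (hind : M.Indep (U \ F)) {Z₁ Z₂ : Finset (Sym2 V)}
    (h₁U : (Z₁ : Set (Sym2 V)) ⊆ U) (h₁e : ∀ x, Even (edeg Z₁ x))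
    (h₂U : (Z₂ : Set (Sym2 V)) ⊆ U) (h₂e : ∀ x, Even (edeg Z₂ x))
    (htr : ∀ f ∈ F, (f ∈ Z₁ ↔ f ∈ Z₂)) : Z₁ = Z₂ := by
  have hD : ((Z₁ ∆ Z₂ : Finset (Sym2 V)) : Set (Sym2 V)) ⊆ U \ F := by
    intro g hg
    have hg' : g ∈ Z₁ ∆ Z₂ := hg
    rw [Finset.mem_symmDiff] at hg'
    constructor
    · rcases hg' with ⟨h, _⟩ | ⟨h, _⟩
      · exact h₁U h
      · exact h₂U h
    · intro hgF
      have := htr g hgF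
      tauto
  have hev : ∀ x, Even (edeg (Z₁ ∆ Z₂) x) := by
    intro x
    have h1 := edeg_parity_symmDiff Z₁ Z₂ x
    have e1 := h₁e x
    have e2 := h₂e x
    rw [Nat.even_iff] at e1 e2 ⊢
    omega
  have hempty := indep_even_empty hM hind hD hev
  have : Z₁ ∆ Z₂ = ⊥ := by rw [hempty]; rfl
  exact symmDiff_eq_bot.1 this

lemma parity_repr (hM : ∀ I, M.Indep I ↔ I ⊆ G.edgeSet ∧ ∀ C, IsCycleEdgeSet G C → ¬ C ⊆ I)
    (hE : M.E = G.edgeSet) {B S : Set (Sym2 V)} (hB : M.IsBasis B S) :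
    ∀ (C₀ : Finset (Sym2 V)), (C₀ : Set (Sym2 V)) ⊆ S →
    ∃ Z : Finset (Sym2 V), (Z : Set (Sym2 V)) ⊆ B ∧ ∀ x, edeg Z x % 2 = edeg C₀ x % 2 := by
  classical
  suffices h : ∀ (n : ℕ) (C₀ : Finset (Sym2 V)), (C₀.filter (fun g => g ∉ B)).card = n →
      (C₀ : Set (Sym2 V)) ⊆ S →
      ∃ Z : Finset (Sym2 V), (Z : Set (Sym2 V)) ⊆ B ∧ ∀ x, edeg Z x % 2 = edeg C₀ x % 2 by
    intro C₀ hC₀S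
    exact h _ C₀ rfl hC₀S
  intro n
  induction n using Nat.strong_induction_on with
  | _ n ih =>
    intro C₀ hcard hC₀S
    by_cases hempty : (C₀.filter (fun g => g ∉ B)) = ∅
    · refine ⟨C₀, ?_, fun x => rfl⟩
      intro g hg
      by_contra hgB
      have : (g : Sym2 V) ∈ C₀.filter (fun g => g ∉ B) := by
        rw [Finset.mem_filter]
        exact ⟨hg, hgB⟩
      rw [hempty] at this
      exact absurd this (Finset.notMem_empty _)
    · obtain ⟨g, hgfil⟩ := Finset.nonempty_of_ne_empty hempty
      rw [Finset.mem_filter] at hgfil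
      obtain ⟨Zg, hZgcyc, hgZg, hZgsub⟩ := basis_fund hM hE hB (hC₀S hgfil.1) hgfil.2
      have hZgS : (Zg : Set (Sym2 V)) ⊆ S := by
        intro z hz
        rcases hZgsub hz with h | h
        · exact h ▸ hC₀S hgfil.1
        · exact hB.subset h
      set C₁ := C₀ ∆ Zg with hC₁
      have hC₁S : (C₁ : Set (Sym2 V)) ⊆ S := by
        intro z hz
        have hz' : z ∈ C₀ ∆ Zg := hz
        rw [Finset.mem_symmDiff] at hz'
        rcases hz' with ⟨h, _⟩ | ⟨h, _⟩
        · exact hC₀S h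
        · exact hZgS h
      have hfil : C₁.filter (fun g => g ∉ B) ⊆ (C₀.filter (fun g => g ∉ B)).erase g := by
        intro x hx
        rw [Finset.mem_filter] at hx
        obtain ⟨hx1, hx2⟩ := hx
        have hx1' : x ∈ C₀ ∆ Zg := hx1
        rw [Finset.mem_symmDiff] at hx1'
        rcases hx1' with ⟨h1, h2⟩ | ⟨h1, h2⟩
        · refine Finset.mem_erase.2 ⟨?_, Finset.mem_filter.2 ⟨h1, hx2⟩⟩
          intro hxg
          exact h2 (hxg ▸ hgZg)
        · exfalso
          rcases hZgsub h1 with h | h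
          · exact h2 (h ▸ hgfil.1)
          · exact hx2 h
      have hlt : (C₁.filter (fun g => g ∉ B)).card < n := by
        calc (C₁.filter (fun g => g ∉ B)).card
            ≤ ((C₀.filter (fun g => g ∉ B)).erase g).card := Finset.card_le_card hfil
          _ < (C₀.filter (fun g => g ∉ B)).card := by
              apply Finset.card_erase_lt_of_mem
              rw [Finset.mem_filter]
              exact hgfil
          _ = n := hcard
      obtain ⟨Z, hZB, hZpar⟩ := ih _ hlt C₁ rfl hC₁S
      refine ⟨Z, hZB, fun x => ?_⟩
      have h1 := hZpar x
      have h2 := edeg_parity_symmDiff C₀ Zg x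
      rw [← hC₁] at h2
      have h3 := cycleEdgeSet_even_edeg hZgcyc x
      rw [Nat.even_iff] at h3
      omega

lemma trace_repr (hM : ∀ I, M.Indep I ↔ I ⊆ G.edgeSet ∧ ∀ C, IsCycleEdgeSet G C → ¬ C ⊆ I)
    (hE : M.E = G.edgeSet) {U F : Set (Sym2 V)} (hbase : M.IsBase (U \ F))
    (hFU : F ⊆ U) (hUE : U ⊆ M.E) :
    ∀ (A : Finset (Sym2 V)), (A : Set (Sym2 V)) ⊆ F →
    ∃ Z : Finset (Sym2 V), (Z : Set (Sym2 V)) ⊆ U ∧ (∀ x, Even (edeg Z x)) ∧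
      ∀ f ∈ F, (f ∈ Z ↔ f ∈ A) := by
  classical
  intro A
  induction A using Finset.induction_on with
  | empty =>
    intro _
    exact ⟨∅, by simp, by intro x; simp [edeg], by simp⟩
  | insert f A hfA ih =>
    intro hins
    have hfF : f ∈ F := hins (by simp)
    have hAF : (A : Set (Sym2 V)) ⊆ F := by
      intro a ha
      exact hins (by simp [ha])
    obtain ⟨Z, hZU, hZev, hZtr⟩ := ih hAF
    have hfnB : f ∉ U \ F := fun h => h.2 hfF
    obtain ⟨Zf, hZfcyc, hfZf, hZfsub⟩ := base_fund hM hE hbase (hUE (hFU hfF)) hfnB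
    have hZfU : (Zf : Set (Sym2 V)) ⊆ U := by
      intro z hz
      rcases hZfsub hz with h | h
      · exact h ▸ hFU hfF
      · exact h.1
    have hZftr : ∀ f' ∈ F, (f' ∈ Zf ↔ f' = f) := by
      intro f' hf'
      constructor
      · intro h
        rcases hZfsub h with h2 | h2
        · exact h2
        · exact absurd hf' h2.2
      · rintro rfl
        exact hfZf
    refine ⟨Z ∆ Zf, ?_, ?_, ?_⟩
    · intro z hz
      have hz' : z ∈ Z ∆ Zf := hz
      rw [Finset.mem_symmDiff] at hz'
      rcases hz' with ⟨h, _⟩ | ⟨h, _⟩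
      · exact hZU h
      · exact hZfU h
    · intro x
      have h1 := edeg_parity_symmDiff Z Zf x
      have h2 := hZev x
      have h3 := cycleEdgeSet_even_edeg hZfcyc x
      rw [Nat.even_iff] at h2 h3 ⊢
      omega
    · intro f' hf'
      rw [Finset.mem_symmDiff]
      have h1 := hZtr f' hf'
      have h2 := hZftr f' hf'
      by_cases hff : f' = f
      · subst hff
        simp only [Finset.mem_insert]
        have hfnA : f' ∉ A := hfA
        have : f' ∉ Z := fun h => hfnA (h1.1 h)
        tauto
      · simp only [Finset.mem_insert]
        tauto

end MatroidAux

section Core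

variable [DecidableEq V] {G : SimpleGraph V} {M : Matroid (Sym2 V)}

lemma union_spanning {B B' X Y : Set (Sym2 V)} (hB : M.IsBasis B X) (hB' : M.IsBasis B' Y)
    (hcover : M.E ⊆ X ∪ Y) : M.Spanning (B ∪ B') := by
  have hsub : B ∪ B' ⊆ M.E := Set.union_subset hB.indep.subset_ground hB'.indep.subset_ground
  rw [Matroid.spanning_iff_ground_subset_closure hsub]
  intro e he
  rcases hcover he with h | h
  · exact M.closure_subset_closure Set.subset_union_left (hB.subset_closure h)
  · exact M.closure_subset_closure Set.subset_union_right (hB'.subset_closure h)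

/-- The key cardinality comparison: if `(U₁ \ F₁)` and `(U \ F)` are both bases of `M`, with
`F₁ ⊆ U₁ ⊆ U`, `F ⊆ U`, and `F` finite, then `|F₁| ≤ |F|`. -/
lemma witness_encard_le (hM : ∀ I, M.Indep I ↔ I ⊆ G.edgeSet ∧ ∀ C, IsCycleEdgeSet G C → ¬ C ⊆ I)
    (hE : M.E = G.edgeSet) {U₁ U F₁ F : Set (Sym2 V)}
    (hU₁U : U₁ ⊆ U) (hUE : U ⊆ M.E)
    (hF₁U : F₁ ⊆ U₁) (hFU : F ⊆ U)
    (hbase₁ : M.IsBase (U₁ \ F₁)) (hbase : M.IsBase (U \ F))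
    (hFfin : F.Finite) :
    F₁.encard ≤ F.encard := by
  classical
  have hchoice : ∀ f ∈ F₁, ∃ Zf : Finset (Sym2 V), IsCycleEdgeSet G (Zf : Set (Sym2 V)) ∧
      f ∈ Zf ∧ (Zf : Set (Sym2 V)) ⊆ insert f (U₁ \ F₁) := by
    intro f hf
    exact base_fund hM hE hbase₁ (hUE (hU₁U (hF₁U hf))) (fun h => h.2 hf)
  choose! Zf hZfc hZfm hZfs using hchoice
  have hZfU : ∀ f ∈ F₁, (↑(Zf f) : Set (Sym2 V)) ⊆ U := by
    intro f hf z hz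
    rcases hZfs f hf hz with h | h
    · exact h ▸ hU₁U (hF₁U hf)
    · exact hU₁U h.1
  have hZfev : ∀ f ∈ F₁, ∀ x, Even (edeg (Zf f) x) :=
    fun f hf x => cycleEdgeSet_even_edeg (hZfc f hf) x
  have hZftr : ∀ f ∈ F₁, ∀ f', f' ∈ F₁ → ((f' ∈ Zf f) ↔ f' = f) := by
    intro f hf f' hf'
    constructor
    · intro h
      rcases hZfs f hf h with h2 | h2
      · exact h2
      · exact absurd hf' h2.2
    · intro h
      rw [h]
      exact hZfm f hf
  have hTI : ∀ Z₁ Z₂ : Finset (Sym2 V), (Z₁ : Set (Sym2 V)) ⊆ U → (∀ x, Even (edeg Z₁ x)) →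
      (Z₂ : Set (Sym2 V)) ⊆ U → (∀ x, Even (edeg Z₂ x)) →
      (∀ f ∈ F, (f ∈ Z₁ ↔ f ∈ Z₂)) → Z₁ = Z₂ :=
    fun Z₁ Z₂ a b c d e => trace_inj hM hbase.indep a b c d e
  have hF₁fin : F₁.Finite := by
    have himage : (fun f => Zf f ∩ hFfin.toFinset) '' F₁ ⊆ ↑(hFfin.toFinset.powerset) := by
      rintro _ ⟨f, hf, rfl⟩
      simp only [Finset.coe_powerset, Set.mem_preimage, Set.mem_powerset_iff]
      intro x hx
      exact (Finset.mem_inter.1 hx).2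
    have hinj : Set.InjOn (fun f => Zf f ∩ hFfin.toFinset) F₁ := by
      intro f hf g hg heq
      simp only at heq
      have htr : ∀ x ∈ F, (x ∈ Zf f ↔ x ∈ Zf g) := by
        intro x hx
        have hx' : x ∈ hFfin.toFinset := hFfin.mem_toFinset.2 hx
        constructor
        · intro h
          have h2 : x ∈ Zf f ∩ hFfin.toFinset := Finset.mem_inter.2 ⟨h, hx'⟩
          rw [heq] at h2
          exact (Finset.mem_inter.1 h2).1
        · intro h
          have h2 : x ∈ Zf g ∩ hFfin.toFinset := Finset.mem_inter.2 ⟨h, hx'⟩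
          rw [← heq] at h2
          exact (Finset.mem_inter.1 h2).1
      have hZeq := hTI (Zf f) (Zf g) (hZfU f hf) (hZfev f hf) (hZfU g hg) (hZfev g hg) htr
      have h1 : f ∈ Zf g := hZeq ▸ hZfm f hf
      exact (hZftr g hg f hf).1 h1
    exact Set.Finite.of_finite_image
      (Set.Finite.subset (hFfin.toFinset.powerset).finite_toSet himage) hinj
  have hrepr := trace_repr hM hE hbase₁ hF₁U (hU₁U.trans hUE)
  choose! ZA hZAU hZAev hZAtr using hrepr
  have hcard : (hF₁fin.toFinset.powerset).card ≤ (hFfin.toFinset.powerset).card := by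
    apply Finset.card_le_card_of_injOn (fun A => ZA A ∩ hFfin.toFinset)
    · intro A hA
      rw [Finset.mem_coe, Finset.mem_powerset]
      exact Finset.inter_subset_right
    · intro A₁ h₁ A₂ h₂ heq
      simp only at heq
      rw [Finset.mem_coe, Finset.mem_powerset] at h₁ h₂
      have hA₁F : (A₁ : Set (Sym2 V)) ⊆ F₁ := by
        intro a ha
        exact hF₁fin.mem_toFinset.1 (h₁ ha)
      have hA₂F : (A₂ : Set (Sym2 V)) ⊆ F₁ := by
        intro a ha
        exact hF₁fin.mem_toFinset.1 (h₂ ha)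
      have htr : ∀ x ∈ F, (x ∈ ZA A₁ ↔ x ∈ ZA A₂) := by
        intro x hx
        have hx' : x ∈ hFfin.toFinset := hFfin.mem_toFinset.2 hx
        constructor
        · intro h
          have h2 : x ∈ ZA A₁ ∩ hFfin.toFinset := Finset.mem_inter.2 ⟨h, hx'⟩
          rw [heq] at h2
          exact (Finset.mem_inter.1 h2).1
        · intro h
          have h2 : x ∈ ZA A₂ ∩ hFfin.toFinset := Finset.mem_inter.2 ⟨h, hx'⟩
          rw [← heq] at h2
          exact (Finset.mem_inter.1 h2).1
      have hZeq := hTI (ZA A₁) (ZA A₂) ((hZAU A₁ hA₁F).trans hU₁U) (hZAev A₁ hA₁F)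
        ((hZAU A₂ hA₂F).trans hU₁U) (hZAev A₂ hA₂F) htr
      ext x
      by_cases hxF₁ : x ∈ F₁
      · rw [← hZAtr A₁ hA₁F x hxF₁, ← hZAtr A₂ hA₂F x hxF₁, hZeq]
      · constructor
        · intro hx
          exact absurd (hA₁F hx) hxF₁
        · intro hx
          exact absurd (hA₂F hx) hxF₁
  rw [Finset.card_powerset, Finset.card_powerset] at hcard
  have hle : hF₁fin.toFinset.card ≤ hFfin.toFinset.card :=
    (Nat.pow_le_pow_iff_right (by norm_num : 1 < 2)).1 hcard
  rw [Set.Finite.encard_eq_coe_toFinset_card hF₁fin, Set.Finite.encard_eq_coe_toFinset_card hFfin]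
  exact_mod_cast hle

end Core

section Graph

variable [DecidableEq V] {G : SimpleGraph V}

/-- The reachability component of `v` in the subgraph with edge set `S`. -/
def comp (S : Set (Sym2 V)) (v : V) : Set V := {w | (SimpleGraph.fromEdgeSet S).Reachable v w}

lemma comp_mem_components {S : Set (Sym2 V)} {v : V} (hv : v ∈ vertsOf S) :
    comp S v ∈ components S := ⟨v, hv, rfl⟩

lemma mem_comp_self (S : Set (Sym2 V)) (v : V) : v ∈ comp S v := Reachable.refl v

lemma comp_eq_of_mem {S : Set (Sym2 V)} {v x : V} (h : x ∈ comp S v) : comp S x = comp S v := by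
  ext y
  exact ⟨fun hy => (h : (fromEdgeSet S).Reachable v x).trans hy,
    fun hy => (h : (fromEdgeSet S).Reachable v x).symm.trans hy⟩

lemma mem_components_iff {S : Set (Sym2 V)} {C : Set V} :
    C ∈ components S ↔ ∃ v ∈ vertsOf S, C = comp S v := Iff.rfl

lemma reach_closed {S : Set (Sym2 V)} (P : V → Prop)
    (hstep : ∀ g ∈ S, (∃ x ∈ g, P x) → ∀ x ∈ g, P x) :
    ∀ {a b : V}, (SimpleGraph.fromEdgeSet S).Walk a b → P a → P b := by
  intro a b w
  induction w with
  | nil => exact id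
  | @cons u c d hadj w ih =>
    intro hPa
    apply ih
    rw [SimpleGraph.fromEdgeSet_adj] at hadj
    exact hstep _ hadj.1 ⟨u, Sym2.mem_iff.2 (Or.inl rfl), hPa⟩ c (Sym2.mem_iff.2 (Or.inr rfl))

lemma reach_transfer {S T : Set (Sym2 V)} (P : V → Prop)
    (hstep : ∀ g ∈ S, (∃ x ∈ g, P x) → g ∈ T ∧ ∀ x ∈ g, P x) :
    ∀ {a b : V}, (SimpleGraph.fromEdgeSet S).Walk a b → P a →
      (SimpleGraph.fromEdgeSet T).Reachable a b := by
  intro a b w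
  induction w with
  | nil => intro _; exact Reachable.refl _
  | @cons u c d hadj w ih =>
    intro hPa
    rw [SimpleGraph.fromEdgeSet_adj] at hadj
    have h1 := hstep _ hadj.1 ⟨u, Sym2.mem_iff.2 (Or.inl rfl), hPa⟩
    have hadj' : (SimpleGraph.fromEdgeSet T).Adj u c :=
      (SimpleGraph.fromEdgeSet_adj _).2 ⟨h1.1, hadj.2⟩
    exact (hadj'.reachable).trans (ih (h1.2 c (Sym2.mem_iff.2 (Or.inr rfl))))

lemma reach_support {H : SimpleGraph V} {a b x : V} (w : H.Walk a b) (hx : x ∈ w.support) :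
    H.Reachable a x := ⟨w.takeUntil x hx⟩

lemma mem_support_of_mem_edge {H : SimpleGraph V} {a b x : V} {w : H.Walk a b} {g : Sym2 V}
    (hg : g ∈ w.edges) (hx : x ∈ g) : x ∈ w.support := by
  induction g using Sym2.ind with
  | _ p q =>
    rcases Sym2.mem_iff.1 hx with h | h
    · subst h
      exact w.fst_mem_support_of_mem_edges hg
    · subst h
      exact w.snd_mem_support_of_mem_edges hg

lemma reach_mono {S T : Set (Sym2 V)} (h : S ⊆ T) {a b : V}
    (hr : (SimpleGraph.fromEdgeSet S).Reachable a b) :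
    (SimpleGraph.fromEdgeSet T).Reachable a b :=
  hr.mono (SimpleGraph.fromEdgeSet_mono h)

lemma cycle_edges_all_reach {Y : Set (Sym2 V)} (hYE : Y ⊆ G.edgeSet) {v : V} {w : G.Walk v v}
    (hw : ∀ e ∈ w.edges, e ∈ Y) {u : V} {g : Sym2 V} (hg : g ∈ w.edges) {p : V} (hp : p ∈ g)
    (hup : (SimpleGraph.fromEdgeSet Y).Reachable u p) :
    ∀ g' ∈ w.edges, ∀ q ∈ g', (SimpleGraph.fromEdgeSet Y).Reachable u q := by
  have hTedges : ∀ e ∈ w.edges, e ∈ (SimpleGraph.fromEdgeSet Y).edgeSet := by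
    intro e he
    rw [SimpleGraph.edgeSet_fromEdgeSet]
    exact ⟨hw e he, G.not_isDiag_of_mem_edgeSet (w.edges_subset_edgeSet he)⟩
  set w' := w.transfer (SimpleGraph.fromEdgeSet Y) hTedges with hw'
  have hedges : w'.edges = w.edges := Walk.edges_transfer w hTedges
  have hsup : w'.support = w.support := Walk.support_transfer w hTedges
  have hpsup : p ∈ w'.support := by
    rw [hsup]
    exact mem_support_of_mem_edge hg hp
  have hreach_vp := reach_support w' hpsup
  intro g' hg' q hq
  have hqsup : q ∈ w'.support := by
    rw [hsup]
    exact mem_support_of_mem_edge hg' hq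
  exact hup.trans (hreach_vp.symm.trans (reach_support w' hqsup))

lemma twoConnected_cycle (h2 : TwoConnected G) {v a b : V} (hva : G.Adj v a) (hvb : G.Adj v b)
    (hab : a ≠ b) :
    ∃ w : G.Walk v v, w.IsCycle ∧ s(v, a) ∈ w.edges ∧ s(v, b) ∈ w.edges ∧
      ∀ g ∈ w.edges, v ∈ g → g = s(v, a) ∨ g = s(v, b) := by
  have hconn := h2.2.2 v
  have hav : a ≠ v := hva.ne'
  have hbv : b ≠ v := hvb.ne'
  have ha : a ∈ ({v}ᶜ : Set V) := by simp [hav]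
  have hb : b ∈ ({v}ᶜ : Set V) := by simp [hbv]
  obtain ⟨w₀⟩ := hconn.preconnected ⟨a, ha⟩ ⟨b, hb⟩
  let φ := (SimpleGraph.Embedding.induce (G := G) ({v}ᶜ : Set V)).toHom
  let p₀ : G.Walk a b := w₀.map φ
  have hvsup : v ∉ p₀.support := by
    have hsup : p₀.support = w₀.support.map φ := Walk.support_map φ w₀
    rw [hsup]
    intro h
    obtain ⟨x, _, hxv⟩ := List.mem_map.1 h
    have hx1 : (x : V) = v := hxv
    exact x.2 (by simp [hx1])
  set p := p₀.bypass with hp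
  have hppath := p₀.bypass_isPath
  have hvp : v ∉ p.support := fun h => hvsup (p₀.support_bypass_subset h)
  have hq : (p.concat hvb.symm).IsPath := by
    rw [Walk.isPath_def, Walk.support_concat]
    refine hppath.support_nodup.append (List.nodup_singleton _) ?_
    intro x hx hx2
    rw [List.mem_singleton] at hx2
    subst hx2
    exact hvp hx
  have hnea : s(v, a) ∉ (p.concat hvb.symm).edges := by
    rw [Walk.edges_concat, List.concat_eq_append]
    intro h
    rcases List.mem_append.1 h with h | h
    · exact hvp (mem_support_of_mem_edge h (Sym2.mem_iff.2 (Or.inl rfl)))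
    · rw [List.mem_singleton] at h
      rcases Sym2.eq_iff.1 h with ⟨h1, h2⟩ | ⟨h1, h2⟩
      · exact hbv h1.symm
      · exact hab h2
  refine ⟨Walk.cons hva (p.concat hvb.symm), (Walk.cons_isCycle_iff _ _).2 ⟨hq, hnea⟩, ?_, ?_, ?_⟩
  · rw [Walk.edges_cons]
    exact List.mem_cons_self
  · rw [Walk.edges_cons, Walk.edges_concat, List.concat_eq_append]
    refine List.mem_cons_of_mem _ (List.mem_append.2 (Or.inr ?_))
    rw [List.mem_singleton]
    exact Sym2.eq_swap
  · intro g hg hvg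
    rw [Walk.edges_cons] at hg
    rcases List.mem_cons.1 hg with h | h
    · exact Or.inl h
    · rw [Walk.edges_concat, List.concat_eq_append] at h
      rcases List.mem_append.1 h with h | h
      · exact absurd (mem_support_of_mem_edge h hvg) hvp
      · rw [List.mem_singleton] at h
        exact Or.inr (h.trans Sym2.eq_swap)

end Graph

section Boundary

variable [DecidableEq V] {G : SimpleGraph V} {M : Matroid (Sym2 V)}

lemma sym2_eq_of_mem {g : Sym2 V} {x y : V} (hx : x ∈ g) (hy : y ∈ g) (hxy : x ≠ y) :
    g = s(x, y) := by
  induction g using Sym2.ind with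
  | _ p q =>
    rcases Sym2.mem_iff.1 hx with h1 | h1 <;> rcases Sym2.mem_iff.1 hy with h2 | h2 <;>
      subst h1 <;> subst h2
    · exact absurd rfl hxy
    · rfl
    · exact Sym2.eq_swap
    · exact absurd rfl hxy

lemma reach_verts {S : Set (Sym2 V)} {v x : V} (hv : v ∈ vertsOf S)
    (h : (SimpleGraph.fromEdgeSet S).Reachable v x) : x ∈ vertsOf S := by
  obtain ⟨w⟩ := h
  exact reach_closed (fun y => y ∈ vertsOf S) (fun g hg _ y hy => ⟨g, hg, hy⟩) w hv

lemma comp_meets_boundary (hconn : G.Connected) {S T : Set (Sym2 V)}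
    (hST : S ∪ T = G.edgeSet) (hTne : T.Nonempty) {v : V} (hv : v ∈ vertsOf S) :
    ∃ z, z ∈ comp S v ∧ z ∈ vertsOf S ∩ vertsOf T := by
  by_contra hno
  push_neg at hno
  set P : V → Prop := fun x => (SimpleGraph.fromEdgeSet S).Reachable v x with hP
  have hP_verts : ∀ x, P x → x ∈ vertsOf S := fun x hx => reach_verts hv hx
  have hstep : ∀ g ∈ G.edgeSet, (∃ x ∈ g, P x) → ∀ x ∈ g, P x := by
    rintro g hg ⟨x, hxg, hPx⟩ y hyg
    have hgS : g ∈ S := by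
      by_contra hgS
      have hgT : g ∈ T := by
        rw [← hST] at hg
        rcases hg with h | h
        · exact absurd h hgS
        · exact h
      exact hno x hPx ⟨hP_verts x hPx, ⟨g, hgT, hxg⟩⟩
    by_cases hxy : x = y
    · exact hxy ▸ hPx
    · have hgeq : g = s(x, y) := sym2_eq_of_mem hxg hyg hxy
      have hadj : (SimpleGraph.fromEdgeSet S).Adj x y :=
        (SimpleGraph.fromEdgeSet_adj _).2 ⟨hgeq ▸ hgS, hxy⟩
      exact hPx.trans hadj.reachable
  obtain ⟨t, ht⟩ := hTne
  have hxt : t.out.1 ∈ t := t.out_fst_mem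
  have hreach : G.Reachable v t.out.1 := hconn.preconnected v t.out.1
  have hreach' : (SimpleGraph.fromEdgeSet G.edgeSet).Reachable v t.out.1 := by
    rwa [SimpleGraph.fromEdgeSet_edgeSet]
  obtain ⟨w⟩ := hreach'
  have hstep' : ∀ g ∈ G.edgeSet, (∃ x ∈ g, P x) → ∀ x ∈ g, P x := hstep
  have hPx : P t.out.1 := reach_closed P hstep' w (Reachable.refl v)
  exact hno t.out.1 hPx ⟨hP_verts _ hPx, ⟨t, ht, hxt⟩⟩

lemma comp_eq_comp_of_mem {S : Set (Sym2 V)} {C : Set V} (hC : C ∈ components S) {z : V}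
    (hz : z ∈ C) : C = comp S z := by
  obtain ⟨v, hv, rfl⟩ := hC
  exact (comp_eq_of_mem hz).symm

lemma components_encard_le_boundary (hconn : G.Connected) {S T : Set (Sym2 V)}
    (hST : S ∪ T = G.edgeSet) (hTne : T.Nonempty) :
    (components S).encard ≤ (vertsOf S ∩ vertsOf T).encard := by
  classical
  obtain ⟨t, ht⟩ := hTne
  haveI : Nonempty V := ⟨t.out.1⟩
  have hTne : T.Nonempty := ⟨t, ht⟩
  have hch : ∀ C ∈ components S, ∃ z, z ∈ C ∧ z ∈ vertsOf S ∩ vertsOf T := by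
    rintro C ⟨v, hv, rfl⟩
    exact comp_meets_boundary hconn hST hTne hv
  choose! zf hz1 hz2 using hch
  have hinj : Set.InjOn zf (components S) := by
    intro C₁ h₁ C₂ h₂ heq
    rw [comp_eq_comp_of_mem h₁ (hz1 _ h₁), comp_eq_comp_of_mem h₂ (hz1 _ h₂), heq]
  calc (components S).encard = (zf '' components S).encard := (hinj.encard_image).symm
    _ ≤ (vertsOf S ∩ vertsOf T).encard := by
        apply Set.encard_le_encard
        rintro _ ⟨C, hC, rfl⟩
        exact hz2 C hC

end Boundary

section BoundaryFinite

variable [DecidableEq V] {G : SimpleGraph V} {M : Matroid (Sym2 V)}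

lemma boundary_finite (hM : ∀ I, M.Indep I ↔ I ⊆ G.edgeSet ∧ ∀ C, IsCycleEdgeSet G C → ¬ C ⊆ I)
    (hE : M.E = G.edgeSet) (h2 : TwoConnected G) {X Y B B' F : Set (Sym2 V)}
    (hXY : X ∪ Y = G.edgeSet) (hdisj : Disjoint X Y)
    (hBX : M.IsBasis B X) (hB'Y : M.IsBasis B' Y)
    (hFU : F ⊆ B ∪ B') (hbase : M.IsBase ((B ∪ B') \ F)) (hFfin : F.Finite) :
    (vertsOf X ∩ vertsOf Y).Finite := by
  classical
  set U : Set (Sym2 V) := B ∪ B' with hU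
  set Zs : Set (Finset (Sym2 V)) := {Z | (Z : Set (Sym2 V)) ⊆ U ∧ ∀ x, Even (edeg Z x)} with hZs
  have hZsfin : Zs.Finite := by
    apply Set.Finite.of_finite_image (f := fun Z => Z ∩ hFfin.toFinset)
    · refine Set.Finite.subset (hFfin.toFinset.powerset).finite_toSet ?_
      rintro _ ⟨Z, _, rfl⟩
      rw [Finset.mem_coe, Finset.mem_powerset]
      exact Finset.inter_subset_right
    · intro Z₁ h₁ Z₂ h₂ heq
      simp only at heq
      apply trace_inj hM hbase.indep h₁.1 h₁.2 h₂.1 h₂.2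
      intro f hf
      have hf' : f ∈ hFfin.toFinset := hFfin.mem_toFinset.2 hf
      constructor
      · intro h
        have h2' : f ∈ Z₁ ∩ hFfin.toFinset := Finset.mem_inter.2 ⟨h, hf'⟩
        rw [heq] at h2'
        exact (Finset.mem_inter.1 h2').1
      · intro h
        have h2' : f ∈ Z₂ ∩ hFfin.toFinset := Finset.mem_inter.2 ⟨h, hf'⟩
        rw [← heq] at h2'
        exact (Finset.mem_inter.1 h2').1
  have hbd : (vertsOf X ∩ vertsOf Y) ⊆ ⋃ Z ∈ Zs, vertsOf (Z : Set (Sym2 V)) := by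
    rintro v ⟨⟨e, heX, hve⟩, ⟨f, hfY, hvf⟩⟩
    obtain ⟨av, ha⟩ := Sym2.mem_iff_exists.1 hve
    obtain ⟨bv, hb⟩ := Sym2.mem_iff_exists.1 hvf
    subst ha
    subst hb
    have hvaadj : G.Adj v av := by
      rw [← SimpleGraph.mem_edgeSet, ← hXY]
      exact Or.inl heX
    have hvbadj : G.Adj v bv := by
      rw [← SimpleGraph.mem_edgeSet, ← hXY]
      exact Or.inr hfY
    have hab : av ≠ bv := by
      rintro rfl
      exact Set.disjoint_left.1 hdisj heX hfY
    obtain ⟨w, hwcyc, hwa, hwb, hwv⟩ := twoConnected_cycle h2 hvaadj hvbadj hab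
    set C : Finset (Sym2 V) := w.edges.toFinset with hC
    have hCE : ∀ g ∈ C, g ∈ G.edgeSet := by
      intro g hg
      exact w.edges_subset_edgeSet (List.mem_toFinset.1 hg)
    set CX := C.filter (fun g => g ∈ X) with hCX
    set CY := C.filter (fun g => g ∈ Y) with hCY
    have hCdisj : Disjoint CX CY := by
      rw [Finset.disjoint_left]
      intro g hg hg'
      exact Set.disjoint_left.1 hdisj (Finset.mem_filter.1 hg).2 (Finset.mem_filter.1 hg').2
    have hCunion : CX ∪ CY = C := by
      ext g
      simp only [hCX, hCY, Finset.mem_union, Finset.mem_filter]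
      constructor
      · rintro (⟨h, _⟩ | ⟨h, _⟩) <;> exact h
      · intro h
        have := hCE g h
        rw [← hXY] at this
        rcases this with h2 | h2
        · exact Or.inl ⟨h, h2⟩
        · exact Or.inr ⟨h, h2⟩
    obtain ⟨ZX, hZXB, hZXpar⟩ := parity_repr hM hE hBX CX (by
      intro g hg
      exact (Finset.mem_filter.1 hg).2)
    obtain ⟨ZY, hZYB, hZYpar⟩ := parity_repr hM hE hB'Y CY (by
      intro g hg
      exact (Finset.mem_filter.1 hg).2)
    have hZdisj : Disjoint ZX ZY := by
      rw [Finset.disjoint_left]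
      intro g hg hg'
      exact Set.disjoint_left.1 hdisj (hBX.subset (hZXB hg)) (hB'Y.subset (hZYB hg'))
    set Zv := ZX ∪ ZY with hZv
    have hZvU : (Zv : Set (Sym2 V)) ⊆ U := by
      intro g hg
      rcases Finset.mem_union.1 hg with h | h
      · exact Or.inl (hZXB h)
      · exact Or.inr (hZYB h)
    have hZvev : ∀ x, Even (edeg Zv x) := by
      intro x
      have h1 := edeg_union_of_disjoint hZdisj x
      rw [← hZv] at h1
      have h2 := hZXpar x
      have h3 := hZYpar x
      have h4 := edeg_union_of_disjoint hCdisj x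
      rw [hCunion] at h4
      have h5 := isCycle_even_edeg hwcyc x
      rw [← hC] at h5
      rw [Nat.even_iff] at h5 ⊢
      omega
    have hCXv : CX.filter (fun g => v ∈ g) = {s(v, av)} := by
      apply Finset.eq_singleton_iff_unique_mem.2
      constructor
      · rw [Finset.mem_filter, hCX, Finset.mem_filter]
        exact ⟨⟨List.mem_toFinset.2 hwa, heX⟩, Sym2.mem_iff.2 (Or.inl rfl)⟩
      · intro g hg
        rw [Finset.mem_filter] at hg
        obtain ⟨hg1, hvg⟩ := hg
        rw [hCX, Finset.mem_filter] at hg1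
        rcases hwv g (List.mem_toFinset.1 hg1.1) hvg with h | h
        · exact h
        · exact absurd (h ▸ hg1.2) (fun hh => Set.disjoint_left.1 hdisj hh hfY)
    have hedegCX : edeg CX v = 1 := by
      rw [edeg, hCXv, Finset.card_singleton]
    have hodd := hZXpar v
    rw [hedegCX] at hodd
    have hZXne : (ZX.filter (fun g => v ∈ g)).Nonempty := by
      rw [Finset.nonempty_iff_ne_empty]
      intro h
      rw [edeg, h, Finset.card_empty] at hodd
      simp at hodd
    obtain ⟨g, hg⟩ := hZXne
    rw [Finset.mem_filter] at hg
    have hvZ : v ∈ vertsOf (Zv : Set (Sym2 V)) :=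
      ⟨g, Finset.mem_coe.2 (Finset.mem_union.2 (Or.inl hg.1)), hg.2⟩
    exact Set.mem_biUnion (show Zv ∈ Zs from ⟨hZvU, hZvev⟩) hvZ
  exact (Set.Finite.biUnion hZsfin (fun Z _ => vertsOf_finite Z)).subset hbd

end BoundaryFinite

section EK

variable [DecidableEq V] {G : SimpleGraph V}

/-- Edges of `Y` in the component of `u`. -/
def EKset (Y : Set (Sym2 V)) (u : V) : Set (Sym2 V) :=
  {e | e ∈ Y ∧ ∃ p ∈ e, (SimpleGraph.fromEdgeSet Y).Reachable u p}

lemma EK_subset {Y : Set (Sym2 V)} {u : V} : EKset Y u ⊆ Y := fun _ he => he.1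

lemma edge_reach {Y : Set (Sym2 V)} (hYE : Y ⊆ G.edgeSet) {g : Sym2 V} (hg : g ∈ Y) {p q : V}
    (hp : p ∈ g) (hq : q ∈ g) : (SimpleGraph.fromEdgeSet Y).Reachable p q := by
  by_cases hpq : p = q
  · exact hpq ▸ Reachable.refl p
  · exact ((SimpleGraph.fromEdgeSet_adj _).2 ⟨(sym2_eq_of_mem hp hq hpq) ▸ hg, hpq⟩).reachable

lemma EK_all {Y : Set (Sym2 V)} (hYE : Y ⊆ G.edgeSet) {u : V} {e : Sym2 V}
    (he : e ∈ EKset Y u) : ∀ p ∈ e, (SimpleGraph.fromEdgeSet Y).Reachable u p := by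
  obtain ⟨heY, q, hq, hr⟩ := he
  intro p hp
  exact hr.trans (edge_reach hYE heY hq hp)

lemma not_reach_of_vertsY' {Y : Set (Sym2 V)} (hYE : Y ⊆ G.edgeSet) {u v : V}
    (hv : v ∈ vertsOf (Y \ EKset Y u)) : ¬ (SimpleGraph.fromEdgeSet Y).Reachable u v := by
  obtain ⟨e, he, hve⟩ := hv
  intro hr
  exact he.2 ⟨he.1, v, hve, hr⟩

lemma comp_Y'_eq {Y : Set (Sym2 V)} (hYE : Y ⊆ G.edgeSet) {u v : V}
    (hnr : ¬ (SimpleGraph.fromEdgeSet Y).Reachable u v) :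
    comp Y v = comp (Y \ EKset Y u) v := by
  ext y
  constructor
  · intro hy
    obtain ⟨w⟩ := (hy : (SimpleGraph.fromEdgeSet Y).Reachable v y)
    refine reach_transfer (T := Y \ EKset Y u)
      (P := fun x => ¬ (SimpleGraph.fromEdgeSet Y).Reachable u x) ?_ w hnr
    rintro g hg ⟨x, hxg, hPx⟩
    constructor
    · refine ⟨hg, ?_⟩
      intro hgEK
      exact hPx (EK_all hYE hgEK x hxg)
    · intro x' hx' hux'
      exact hPx (hux'.trans (edge_reach hYE hg hx' hxg))
  · intro hy
    exact reach_mono Set.diff_subset hy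

lemma components_Y_split {Y : Set (Sym2 V)} (hYE : Y ⊆ G.edgeSet) {u : V} (huY : u ∈ vertsOf Y) :
    components Y = insert (comp Y u) (components (Y \ EKset Y u)) ∧
      comp Y u ∉ components (Y \ EKset Y u) := by
  constructor
  · ext C
    rw [Set.mem_insert_iff, mem_components_iff, mem_components_iff]
    constructor
    · rintro ⟨v, hv, rfl⟩
      by_cases hr : (SimpleGraph.fromEdgeSet Y).Reachable u v
      · left
        exact comp_eq_of_mem (show v ∈ comp Y u from hr)
      · right
        refine ⟨v, ?_, comp_Y'_eq hYE hr⟩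
        obtain ⟨e, he, hve⟩ := hv
        refine ⟨e, ⟨he, ?_⟩, hve⟩
        intro heEK
        exact hr (EK_all hYE heEK v hve)
    · rintro (rfl | ⟨v, hv, rfl⟩)
      · exact ⟨u, huY, rfl⟩
      · exact ⟨v, vertsOf_mono Set.diff_subset hv,
          (comp_Y'_eq hYE (not_reach_of_vertsY' hYE hv)).symm⟩
  · rw [mem_components_iff]
    rintro ⟨v, hv, hC⟩
    have h1 : v ∈ comp Y u := by
      rw [hC]
      exact mem_comp_self _ v
    exact not_reach_of_vertsY' hYE hv h1

lemma components_X'_le (hconn : G.Connected) {X Y : Set (Sym2 V)}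
    (hXY : X ∪ Y = G.edgeSet) (hdisj : Disjoint X Y)
    (hXne : X.Nonempty) (hYE : Y ⊆ G.edgeSet) {u : V} (huY : u ∈ vertsOf Y) :
    (components (X ∪ EKset Y u)).encard ≤ (components X).encard := by
  classical
  obtain ⟨ex, hex⟩ := hXne
  haveI : Nonempty V := ⟨ex.out.1⟩
  set P : V → Prop := fun x => (SimpleGraph.fromEdgeSet Y).Reachable u x with hP
  -- existence of a vertex of X reachable (within Y) from u
  have hz₀ : ∃ z, z ∈ vertsOf X ∧ P z := by
    by_contra hno
    push_neg at hno
    have hstep : ∀ g ∈ G.edgeSet, (∃ x ∈ g, P x) → ∀ x ∈ g, P x := by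
      rintro g hg ⟨x, hxg, hPx⟩ y hyg
      have hgY : g ∈ Y := by
        rw [← hXY] at hg
        rcases hg with h | h
        · exact absurd hPx (hno x ⟨g, h, hxg⟩)
        · exact h
      exact hPx.trans (edge_reach hYE hgY hxg hyg)
    have hreach : G.Reachable u ex.out.1 := hconn.preconnected _ _
    have hreach' : (SimpleGraph.fromEdgeSet G.edgeSet).Reachable u ex.out.1 := by
      rwa [SimpleGraph.fromEdgeSet_edgeSet]
    obtain ⟨w⟩ := hreach'
    have hPz := reach_closed P hstep w (Reachable.refl u)
    exact hno ex.out.1 ⟨ex, hex, ex.out_fst_mem⟩ hPz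
  obtain ⟨z₀, hz₀X, hz₀P⟩ := hz₀
  have hch : ∀ C ∈ components (X ∪ EKset Y u), ∃ z, z ∈ C ∧ z ∈ vertsOf X := by
    intro C hC
    rw [mem_components_iff] at hC
    obtain ⟨v, hv, rfl⟩ := hC
    rw [vertsOf_union] at hv
    rcases hv with hvX | hvK
    · exact ⟨v, mem_comp_self _ v, hvX⟩
    · obtain ⟨e, heK, hve⟩ := hvK
      have hPv : P v := EK_all hYE heK v hve
      have hr : (SimpleGraph.fromEdgeSet Y).Reachable v z₀ := hPv.symm.trans hz₀P
      obtain ⟨w⟩ := hr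
      have hrEK : (SimpleGraph.fromEdgeSet (EKset Y u)).Reachable v z₀ := by
        refine reach_transfer (T := EKset Y u) (P := P) ?_ w hPv
        rintro g hg ⟨x, hxg, hPx⟩
        refine ⟨⟨hg, x, hxg, hPx⟩, ?_⟩
        intro x' hx'
        exact EK_all hYE ⟨hg, x, hxg, hPx⟩ x' hx'
      exact ⟨z₀, reach_mono Set.subset_union_right hrEK, hz₀X⟩
  choose! zf hz1 hz2 using hch
  have hinj : Set.InjOn (fun C => comp X (zf C)) (components (X ∪ EKset Y u)) := by
    intro C₁ h₁ C₂ h₂ heq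
    simp only at heq
    have hz21 : zf C₂ ∈ comp X (zf C₁) := by
      rw [heq]
      exact mem_comp_self _ _
    have hr : (SimpleGraph.fromEdgeSet (X ∪ EKset Y u)).Reachable (zf C₁) (zf C₂) :=
      reach_mono Set.subset_union_left hz21
    rw [comp_eq_comp_of_mem h₁ (hz1 _ h₁), comp_eq_comp_of_mem h₂ (hz1 _ h₂)]
    exact (comp_eq_of_mem (show zf C₂ ∈ comp (X ∪ EKset Y u) (zf C₁) from hr)).symm
  calc (components (X ∪ EKset Y u)).encard
      = ((fun C => comp X (zf C)) '' components (X ∪ EKset Y u)).encard := (hinj.encard_image).symm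
    _ ≤ (components X).encard := by
        apply Set.encard_le_encard
        rintro _ ⟨C, hC, rfl⟩
        exact comp_mem_components (hz2 C hC)

end EK

section Build

variable [DecidableEq V] {G : SimpleGraph V} {M : Matroid (Sym2 V)}

lemma build_witness {ℓ : ℕ} {X Y B B'' : Set (Sym2 V)}
    (hcover : M.E ⊆ X ∪ Y) (hEdiffX : M.E \ X = Y) (hXE : X ⊆ M.E)
    (hB : M.IsBasis B X) (hB'' : M.IsBasis B'' Y)
    (hWit : ∀ F, ConnWitness M X F → F.encard + 1 ≤ (ℓ : ℕ∞)) :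
    ∃ F, F ⊆ B ∪ B'' ∧ M.IsBase ((B ∪ B'') \ F) ∧ F.Finite ∧ F.encard + 1 ≤ (ℓ : ℕ∞) := by
  have hspan := union_spanning hB hB'' hcover
  obtain ⟨⟨B₀, hB₀, hB₀sub⟩, _⟩ := Matroid.spanning_iff_exists_isBase_subset'.1 hspan
  have hbase : M.IsBase ((B ∪ B'') \ ((B ∪ B'') \ B₀)) := by
    rw [Set.diff_diff_cancel_left hB₀sub]
    exact hB₀
  have hcw : ConnWitness M X ((B ∪ B'') \ B₀) := by
    refine ⟨B, B'', (Matroid.isBase_restrict_iff hXE).2 hB, ?_, Set.diff_subset, hbase⟩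
    rw [hEdiffX]
    exact (Matroid.isBase_restrict_iff hB''.subset_ground).2 hB''
  have hbound := hWit _ hcw
  have hfin : ((B ∪ B'') \ B₀).Finite := by
    rw [← Set.encard_ne_top_iff]
    intro htop
    rw [htop] at hbound
    simp at hbound
  exact ⟨(B ∪ B'') \ B₀, Set.diff_subset, hbase, hfin, hbound⟩

end Build

/-- Let `G` be an infinite 2-connected finitely separable graph with
finite-cycle matroid `M`, let `ℓ ≥ 1`, and let `(X, Y)` be an `ℓ`-separation of `M` with `Y`
infinite such that `c(X) + c(Y)` is minimal among all `ℓ`-separations of `M`. Then the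
subgraph `(V[Y], Y)` is connected. -/
theorem Y_connected_of_min_separation {V : Type*} [Infinite V] (G : SimpleGraph V)
    (h2 : TwoConnected G) (hfs : FinitelySeparable G) (M : Matroid (Sym2 V))
    (hM : IsFiniteCycleMatroid G M) (ℓ : ℕ) (hℓ : 1 ≤ ℓ) (X Y : Set (Sym2 V))
    (hsep : MatSep M ℓ X Y) (hYinf : Y.Infinite)
    (hmin : ∀ X' Y' : Set (Sym2 V), MatSep M ℓ X' Y' →
      (components X).encard + (components Y).encard ≤
        (components X').encard + (components Y').encard) :
    SubConnected Y := by
  classical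
  obtain ⟨hE, hIndep⟩ := hM
  obtain ⟨hUnion, hDisj, hXcard, hYcard, hWit⟩ := hsep
  have hconn := h2.1
  have hXE : X ⊆ M.E := hUnion ▸ Set.subset_union_left
  have hYE : Y ⊆ M.E := hUnion ▸ Set.subset_union_right
  have hXEe : X ⊆ G.edgeSet := hE ▸ hXE
  have hYEe : Y ⊆ G.edgeSet := hE ▸ hYE
  have hXYe : X ∪ Y = G.edgeSet := hE ▸ hUnion
  have hEdiffX : M.E \ X = Y := by
    rw [← hUnion]
    ext e
    constructor
    · rintro ⟨h1, h2'⟩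
      exact h1.resolve_left h2'
    · intro h
      exact ⟨Or.inr h, fun hX => Set.disjoint_left.1 hDisj hX h⟩
  have h1ℓ : (1 : ℕ∞) ≤ (ℓ : ℕ∞) := by exact_mod_cast hℓ
  have hXne : X.Nonempty := by
    rw [← Set.one_le_encard_iff_nonempty]
    exact le_trans h1ℓ hXcard
  have hYne : Y.Nonempty := by
    rw [← Set.one_le_encard_iff_nonempty]
    exact le_trans h1ℓ hYcard
  have hvY : (vertsOf Y).Nonempty := by
    obtain ⟨e, he⟩ := hYne
    exact ⟨e.out.1, e, he, e.out_fst_mem⟩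
  refine ⟨hvY, ?_⟩
  by_contra hcon
  push_neg at hcon
  obtain ⟨u₀, hu₀, w₀, hw₀, hnr⟩ := hcon
  have hEKd : ∀ e ∈ EKset Y u₀, e ∉ EKset Y w₀ := by
    intro e he1 he2
    exact hnr ((EK_all hYEe he1 _ e.out_fst_mem).trans
      (EK_all hYEe he2 _ e.out_fst_mem).symm)
  obtain ⟨u, huY, hY'inf⟩ : ∃ u, u ∈ vertsOf Y ∧ (Y \ EKset Y u).Infinite := by
    by_cases hcase : (Y \ EKset Y u₀).Infinite
    · exact ⟨u₀, hu₀, hcase⟩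
    · refine ⟨w₀, hw₀, ?_⟩
      rw [Set.not_infinite] at hcase
      have h1 : EKset Y u₀ ⊆ Y \ EKset Y w₀ := fun e he => ⟨he.1, hEKd e he⟩
      have hinf2 : (EKset Y u₀).Infinite := by
        refine (hYinf.diff hcase).mono ?_
        rintro e ⟨heY, he2⟩
        by_contra hek
        exact he2 ⟨heY, hek⟩
      exact hinf2.mono h1
  have hKY : EKset Y u ⊆ Y := EK_subset
  have hX'E : X ∪ EKset Y u ⊆ M.E := Set.union_subset hXE (hKY.trans hYE)
  have hX'union : (X ∪ EKset Y u) ∪ (Y \ EKset Y u) = M.E := by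
    rw [← hUnion, Set.union_assoc, Set.union_diff_cancel hKY]
  have hX'disj : Disjoint (X ∪ EKset Y u) (Y \ EKset Y u) := by
    rw [Set.disjoint_left]
    rintro e (heX | heK) ⟨heY, henK⟩
    · exact Set.disjoint_left.1 hDisj heX heY
    · exact henK heK
  have hEdiffX' : M.E \ (X ∪ EKset Y u) = Y \ EKset Y u := by
    rw [← hX'union]
    ext e
    constructor
    · rintro ⟨h1, h2'⟩
      exact h1.resolve_left h2'
    · intro h
      exact ⟨Or.inr h, fun hX2 => Set.disjoint_left.1 hX'disj hX2 h⟩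
  have hY'E : Y \ EKset Y u ⊆ M.E := Set.diff_subset.trans hYE
  have hsep' : MatSep M ℓ (X ∪ EKset Y u) (Y \ EKset Y u) := by
    refine ⟨hX'union, hX'disj,
      le_trans hXcard (Set.encard_le_encard Set.subset_union_left), ?_, ?_⟩
    · rw [hY'inf.encard_eq]
      exact le_top
    · rintro F₁ ⟨B₁, B₂, hB₁, hB₂, hF₁U, hbase₁⟩
      rw [hEdiffX'] at hB₂
      have hB₁b : M.IsBasis B₁ (X ∪ EKset Y u) := (Matroid.isBase_restrict_iff hX'E).1 hB₁
      have hB₂b : M.IsBasis B₂ (Y \ EKset Y u) := (Matroid.isBase_restrict_iff hY'E).1 hB₂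
      have hIid : M.Indep ((B₁ ∩ EKset Y u) ∪ B₂) := by
        rw [hIndep]
        constructor
        · rintro e (h | h)
          · exact hYEe (hKY h.2)
          · exact hYEe (hB₂b.subset h).1
        · rintro C ⟨v, w, hw, rfl⟩ hCsub
          have hedgesY : ∀ e ∈ w.edges, e ∈ Y := by
            intro e he
            rcases hCsub he with h | h
            · exact hKY h.2
            · exact (hB₂b.subset h).1
          by_cases hexK : ∃ g ∈ w.edges, g ∈ EKset Y u
          · obtain ⟨g, hgw, hgK⟩ := hexK
            obtain ⟨hgY, p, hpg, hpr⟩ := hgK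
            have hall := cycle_edges_all_reach hYEe hedgesY hgw hpg hpr
            have hsubB₁ : {e | e ∈ w.edges} ⊆ B₁ := by
              intro e he
              have heK : e ∈ EKset Y u :=
                ⟨hedgesY e he, e.out.1, e.out_fst_mem, hall e he _ e.out_fst_mem⟩
              rcases hCsub he with h | h
              · exact h.1
              · exact absurd heK (hB₂b.subset h).2
            exact ((hIndep B₁).1 hB₁b.indep).2 _ ⟨v, w, hw, rfl⟩ hsubB₁
          · push_neg at hexK
            have hsubB₂ : {e | e ∈ w.edges} ⊆ B₂ := by
              intro e he
              rcases hCsub he with h | h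
              · exact absurd h.2 (hexK e he)
              · exact h
            exact ((hIndep B₂).1 hB₂b.indep).2 _ ⟨v, w, hw, rfl⟩ hsubB₂
      obtain ⟨B, hBbasis, hBsub⟩ :=
        (hB₁b.indep.subset (Set.inter_subset_left : B₁ ∩ X ⊆ B₁)).subset_isBasis_of_subset
          Set.inter_subset_right hXE
      obtain ⟨B'', hB''basis, hB''sub⟩ := hIid.subset_isBasis_of_subset
        (by
          rintro e (h | h)
          · exact hKY h.2
          · exact (hB₂b.subset h).1)
        hYE
      obtain ⟨F, hFsub, hFbase, hFfin, hFbound⟩ :=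
        build_witness hUnion.symm.subset hEdiffX hXE hBbasis hB''basis hWit
      have hsubU : B₁ ∪ B₂ ⊆ B ∪ B'' := by
        rintro e (h | h)
        · rcases hB₁b.subset h with hX2 | hK2
          · exact Or.inl (hBsub ⟨h, hX2⟩)
          · exact Or.inr (hB''sub (Or.inl ⟨h, hK2⟩))
        · exact Or.inr (hB''sub (Or.inr h))
      have hUE2 : B ∪ B'' ⊆ M.E :=
        Set.union_subset hBbasis.indep.subset_ground hB''basis.indep.subset_ground
      have hle := witness_encard_le hIndep hE hsubU hUE2 hF₁U hFsub hbase₁ hFbase hFfin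
      calc F₁.encard + 1 ≤ F.encard + 1 := add_le_add_left hle 1
        _ ≤ (ℓ : ℕ∞) := hFbound
  obtain ⟨Bx, hBx⟩ := M.exists_isBasis X hXE
  obtain ⟨By, hBy⟩ := M.exists_isBasis Y hYE
  obtain ⟨F0, hF0sub, hF0base, hF0fin, _⟩ :=
    build_witness hUnion.symm.subset hEdiffX hXE hBx hBy hWit
  have hbfin : (vertsOf X ∩ vertsOf Y).Finite :=
    boundary_finite hIndep hE h2 hXYe hDisj hBx hBy hF0sub hF0base hF0fin
  have hcXle : (components X).encard ≤ (vertsOf X ∩ vertsOf Y).encard :=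
    components_encard_le_boundary hconn hXYe hYne
  have hcYle : (components Y).encard ≤ (vertsOf Y ∩ vertsOf X).encard :=
    components_encard_le_boundary hconn (by rw [Set.union_comm]; exact hXYe) hXne
  have hsplit := components_Y_split hYEe huY
  have hcY : (components Y).encard = (components (Y \ EKset Y u)).encard + 1 := by
    rw [hsplit.1]
    exact Set.encard_insert_of_notMem hsplit.2
  have hcX'le : (components (X ∪ EKset Y u)).encard ≤ (components X).encard :=
    components_X'_le hconn hXYe hDisj hXne hYEe huY
  have hcXfin : (components X).encard ≠ ⊤ := by
    intro h
    rw [h] at hcXle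
    exact hbfin.encard_lt_top.ne (top_le_iff.1 hcXle)
  have hcY'fin : (components (Y \ EKset Y u)).encard ≠ ⊤ := by
    intro h
    have h2' : (components Y).encard = ⊤ := by
      rw [hcY, h]
      rfl
    rw [h2'] at hcYle
    have h3' : (vertsOf Y ∩ vertsOf X).encard = ⊤ := top_le_iff.1 hcYle
    rw [Set.inter_comm] at h3'
    exact hbfin.encard_lt_top.ne h3'
  have hmin' := hmin _ _ hsep'
  rw [hcY] at hmin'
  have hfinal : (components X).encard + (components (Y \ EKset Y u)).encard + 1
      ≤ (components X).encard + (components (Y \ EKset Y u)).encard := by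
    calc (components X).encard + (components (Y \ EKset Y u)).encard + 1
        = (components X).encard + ((components (Y \ EKset Y u)).encard + 1) := by
          rw [add_assoc]
      _ ≤ (components (X ∪ EKset Y u)).encard + (components (Y \ EKset Y u)).encard := hmin'
      _ ≤ (components X).encard + (components (Y \ EKset Y u)).encard :=
          add_le_add_left hcX'le _
  have hne : (components X).encard + (components (Y \ EKset Y u)).encard ≠ ⊤ := by
    intro h
    rcases WithTop.add_eq_top.1 h with h | h
    · exact hcXfin h
    · exact hcY'fin h
  exact absurd ((ENat.add_one_le_iff hne).1 hfinal) (lt_irrefl _)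
end

section
/- Let G be a 2-connected finitely separable graph, let M be a matroid on the edge set of G whose circuits are exactly the edge sets of (finite) cycles of G, and let k ≥ 1 be an integer. If (X,Y) is a k-Tutte-separation of G, then κ_M(X) ≤ k − 1; in particular (X,Y) is a k-separation of M. -/
open scoped Matroid

variable {V : Type*} {α : Type*}

section Helpers

variable {W : Type*} {Gb : SimpleGraph W}

lemma vertsOf_mono_s11 {X Y : Set (Sym2 W)} (h : X ⊆ Y) : vertsOf X ⊆ vertsOf Y := by
  rintro v ⟨e, he, hv⟩; exact ⟨e, h he, hv⟩

lemma vertsOf_union_s11 (X Y : Set (Sym2 W)) : vertsOf (X ∪ Y) = vertsOf X ∪ vertsOf Y := by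
  ext v; constructor
  · rintro ⟨e, he | he, hv⟩
    · exact Or.inl ⟨e, he, hv⟩
    · exact Or.inr ⟨e, he, hv⟩
  · rintro (⟨e, he, hv⟩ | ⟨e, he, hv⟩)
    · exact ⟨e, Or.inl he, hv⟩
    · exact ⟨e, Or.inr he, hv⟩

lemma vertsOf_finite_s11 {X : Set (Sym2 W)} (h : X.Finite) : (vertsOf X).Finite := by
  have : vertsOf X = ⋃ e ∈ X, {v | v ∈ e} := by
    ext v; simp [vertsOf]
  rw [this]
  refine h.biUnion (fun e _ => ?_)
  induction e with
  | h a b =>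
    have : {v | v ∈ s(a, b)} ⊆ {a, b} := by
      intro v hv; simpa [Sym2.mem_iff] using hv
    exact Set.Finite.subset (Set.toFinite _) this

/-- a walk between distinct vertices has an edge containing the start -/
lemma walk_exists_start_edge {u v : W} (p : Gb.Walk u v) (h : u ≠ v) :
    ∃ e ∈ p.edges, u ∈ e := by
  cases p with
  | nil => exact absurd rfl h
  | cons h' q =>
    rename_i w
    refine ⟨s(u, w), ?_, ?_⟩
    · simp
    · simp

lemma walk_exists_end_edge {u v : W} (p : Gb.Walk u v) (h : u ≠ v) :
    ∃ e ∈ p.edges, v ∈ e := by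
  obtain ⟨e, he, hv⟩ := walk_exists_start_edge p.reverse (Ne.symm h)
  exact ⟨e, by simpa [SimpleGraph.Walk.edges_reverse, List.mem_reverse] using he, hv⟩

lemma mem_support_of_mem_edges' {u v x : W} {p : Gb.Walk u v} {e : Sym2 W}
    (he : e ∈ p.edges) (hx : x ∈ e) : x ∈ p.support := by
  induction e with
  | h a b =>
    rcases Sym2.mem_iff.mp hx with rfl | rfl
    · exact SimpleGraph.Walk.fst_mem_support_of_mem_edges p he
    · exact SimpleGraph.Walk.snd_mem_support_of_mem_edges p he

/-- in a path, the only edge containing the initial vertex is the first edge -/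
lemma path_start_edge_unique {u v : W} {p : Gb.Walk u v} (hp : p.IsPath)
    {e e' : Sym2 W} (he : e ∈ p.edges) (hu : u ∈ e) (he' : e' ∈ p.edges) (hu' : u ∈ e') :
    e = e' := by
  cases p with
  | nil => simp at he
  | cons h q =>
    rw [SimpleGraph.Walk.cons_isPath_iff] at hp
    rename_i w
    have key : ∀ f : Sym2 W, f ∈ (SimpleGraph.Walk.cons h q).edges → u ∈ f → f = s(u, w) := by
      intro f hf huf
      rw [SimpleGraph.Walk.edges_cons, List.mem_cons] at hf
      rcases hf with rfl | hf
      · rfl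
      · exact absurd (mem_support_of_mem_edges' hf huf) hp.2
    rw [key e he hu, key e' he' hu']

/-- Lemma A : a finite nonempty acyclic edge set (of non-loops) has fewer edges
than vertices. -/
lemma lemA {A : Set (Sym2 W)} (hfin : A.Finite) (hne : A.Nonempty)
    (hnd : ∀ e ∈ A, ¬ e.IsDiag) (hvfin : (vertsOf A).Finite)
    (hac : (SimpleGraph.fromEdgeSet A).IsAcyclic) :
    A.ncard + 1 ≤ (vertsOf A).ncard := by
  classical
  set H := SimpleGraph.fromEdgeSet A with hH
  obtain ⟨e₀, he₀⟩ := hne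
  have hVne : ∃ v, v ∈ vertsOf A := by
    induction e₀ with
    | h a b => exact ⟨a, s(a, b), he₀, Sym2.mem_mk_left a b⟩
  obtain ⟨x₀, hx₀⟩ := hVne
  haveI : Nonempty W := ⟨x₀⟩
  let r : W → W := fun v => (H.connectedComponentMk v).out
  have hmk : ∀ v, H.connectedComponentMk (r v) = H.connectedComponentMk v := by
    intro v; exact Quot.out_eq _
  have hrr : ∀ v, r (r v) = r v := by
    intro v; show (H.connectedComponentMk (r v)).out = _; rw [hmk v]
  have hre : ∀ v, H.Reachable v (r v) :=
    fun v => (SimpleGraph.ConnectedComponent.exact (hmk v)).symm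
  have hq0 : ∀ v, ∃ p : H.Walk v (r v), p.IsPath :=
    fun v => ⟨(hre v).some.toPath, (hre v).some.toPath.2⟩
  choose q hq using hq0
  have hroot_eq : ∀ {u v : W}, H.Reachable u v → r u = r v := by
    intro u v huv
    show (H.connectedComponentMk u).out = (H.connectedComponentMk v).out
    rw [SimpleGraph.ConnectedComponent.sound huv]
  have key : ∀ e ∈ A, ∃ x, x ∈ e ∧ e ∈ (q x).edges := by
    intro e he
    induction e with
    | h u v =>
      have hne' : u ≠ v := fun h => hnd _ he (by rw [h]; exact Sym2.isDiag_iff_proj_eq |>.mpr rfl)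
      have hadj : H.Adj u v := (SimpleGraph.fromEdgeSet_adj _).mpr ⟨he, hne'⟩
      by_contra hcon
      push_neg at hcon
      have hru : r v = r u := hroot_eq hadj.symm.reachable
      have hqv : ((q v).copy rfl hru).IsPath := (SimpleGraph.Walk.isPath_copy _ _ _).mpr (hq v)
      have husup : u ∉ ((q v).copy rfl hru).support := by
        intro hu
        have htake := (hqv.takeUntil hu)
        have hsing : (SimpleGraph.Path.singleton hadj.symm : H.Walk v u)
            = (((q v).copy rfl hru).takeUntil u hu) := by
          have := hac.path_unique (SimpleGraph.Path.singleton hadj.symm) ⟨_, htake⟩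
          exact congrArg Subtype.val this
        have : s(v, u) ∈ ((q v).copy rfl hru).edges := by
          refine SimpleGraph.Walk.edges_takeUntil_subset _ hu ?_
          rw [← hsing]
          simp [SimpleGraph.Path.singleton]
        rw [SimpleGraph.Walk.edges_copy] at this
        exact hcon v (Sym2.mem_mk_right u v) (by rwa [Sym2.eq_swap] at this)
      have hpath : (SimpleGraph.Walk.cons hadj ((q v).copy rfl hru)).IsPath :=
        (SimpleGraph.Walk.cons_isPath_iff _ _).mpr ⟨hqv, husup⟩
      have heq : (⟨_, hpath⟩ : H.Path u (r u)) = ⟨q u, hq u⟩ := hac.path_unique _ _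
      have : s(u, v) ∈ (q u).edges := by
        have := congrArg (fun p : H.Path u (r u) => p.1.edges) heq
        simp only [SimpleGraph.Walk.edges_cons, SimpleGraph.Walk.edges_copy] at this
        rw [← this]
        exact List.mem_cons_self
      exact hcon u (Sym2.mem_mk_left u v) this
  choose φ hφmem hφedge using key
  let g : Sym2 W → W := fun e => if h : e ∈ A then φ e h else x₀
  have hg_ne_root : ∀ e (he : e ∈ A), φ e he ≠ r (φ e he) := by
    intro e he habs
    have : ((q (φ e he)).copy rfl habs.symm).IsPath :=
      (SimpleGraph.Walk.isPath_copy _ _ _).mpr (hq _)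
    have hnil : (q (φ e he)).copy rfl habs.symm = SimpleGraph.Walk.nil :=
      (SimpleGraph.Walk.isPath_iff_eq_nil).mp this
    have : e ∈ ((q (φ e he)).copy rfl habs.symm).edges := by
      rw [SimpleGraph.Walk.edges_copy]; exact hφedge e he
    rw [hnil] at this
    simp at this
  have hginj : Set.InjOn g A := by
    intro e he e' he' heq
    simp only [g, dif_pos he, dif_pos he'] at heq
    exact path_start_edge_unique (hq (φ e he)) (hφedge e he) (hφmem e he)
      (heq ▸ hφedge e' he') (heq ▸ hφmem e' he')
  have hmemV : ∀ e (he : e ∈ A), φ e he ∈ vertsOf A := fun e he => ⟨e, he, hφmem e he⟩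
  have himg : ∀ e ∈ A, g e ∈ vertsOf A \ {r x₀} := by
    intro e he
    refine ⟨by simp only [g, dif_pos he]; exact hmemV e he, ?_⟩
    simp only [g, dif_pos he, Set.mem_singleton_iff]
    intro habs
    exact hg_ne_root e he (by rw [habs, hrr])
  have hcard : A.ncard ≤ (vertsOf A \ {r x₀}).ncard :=
    Set.ncard_le_ncard_of_injOn g himg hginj (hvfin.diff)
  have hr₀mem : r x₀ ∈ vertsOf A := by
    by_cases h : x₀ = r x₀
    · rwa [← h]
    · obtain ⟨p⟩ := hre x₀
      obtain ⟨e, he, hv⟩ := walk_exists_end_edge p h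
      have : e ∈ A := by
        have := p.edges_subset_edgeSet he
        rw [SimpleGraph.edgeSet_fromEdgeSet] at this
        exact this.1
      exact ⟨e, this, hv⟩
  have := Set.ncard_diff_singleton_add_one hr₀mem hvfin
  omega

/-- Lemma B : a connected finite edge set has at least `|V| - 1` edges. -/
lemma lemB {A : Set (Sym2 W)} (hfin : A.Finite) (hvfin : (vertsOf A).Finite)
    {r₀ : W} (hr₀ : r₀ ∈ vertsOf A)
    (hconn : ∀ u ∈ vertsOf A, (SimpleGraph.fromEdgeSet A).Reachable u r₀) :
    (vertsOf A).ncard ≤ A.ncard + 1 := by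
  classical
  set H := SimpleGraph.fromEdgeSet A with hH
  haveI : Nonempty (Sym2 W) := ⟨s(r₀, r₀)⟩
  have key : ∀ v ∈ vertsOf A \ {r₀}, ∃ e : Sym2 W, e ∈ A ∧ v ∈ e ∧
      (∃ w, H.Adj v w ∧ e = s(v, w) ∧ H.dist w r₀ + 1 = H.dist v r₀) := by
    rintro v ⟨hv, hvr⟩
    have hreach : H.Reachable v r₀ := hconn v hv
    obtain ⟨p, hp⟩ := hreach.exists_walk_length_eq_dist
    have hvr' : v ≠ r₀ := by simpa using hvr
    cases p with
    | nil => exact absurd rfl hvr'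
    | cons h' q =>
      rename_i w
      refine ⟨s(v, w), ?_, Sym2.mem_mk_left _ _, w, h', rfl, ?_⟩
      · have hmem : s(v, w) ∈ H.edgeSet := h'
        rw [hH, SimpleGraph.edgeSet_fromEdgeSet] at hmem
        exact hmem.1
      · rw [SimpleGraph.Walk.length_cons] at hp
        have h1 : H.dist w r₀ ≤ q.length := SimpleGraph.dist_le q
        have h2 : H.dist v r₀ ≤ H.dist w r₀ + 1 := by
          obtain ⟨q', hq'⟩ :=
            (h'.symm.reachable.trans (hconn v hv)).exists_walk_length_eq_dist
          calc H.dist v r₀ ≤ (SimpleGraph.Walk.cons h' q').length := SimpleGraph.dist_le _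
            _ = H.dist w r₀ + 1 := by rw [SimpleGraph.Walk.length_cons, hq']
        omega
  choose φ hφA hφv hφw using key
  let g : W → Sym2 W := fun v => if h : v ∈ vertsOf A \ {r₀} then φ v h else Classical.arbitrary _
  have hinj : Set.InjOn g (vertsOf A \ {r₀}) := by
    intro u hu u' hu' heq
    simp only [g, dif_pos hu, dif_pos hu'] at heq
    by_contra hne
    obtain ⟨w, hadj, hedge, hdist⟩ := hφw u hu
    obtain ⟨w', hadj', hedge', hdist'⟩ := hφw u' hu'
    rw [hedge, hedge'] at heq
    rw [Sym2.eq_iff] at heq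
    rcases heq with ⟨rfl, rfl⟩ | ⟨rfl, rfl⟩
    · exact hne rfl
    · omega
  have hcard : (vertsOf A \ {r₀}).ncard ≤ A.ncard := by
    refine Set.ncard_le_ncard_of_injOn g (fun v hv => ?_) hinj hfin
    simp only [g, dif_pos hv]; exact hφA v hv
  have := Set.ncard_diff_singleton_add_one hr₀ hvfin
  omega

/-- an edge set with no cycle of `G` inside gives an acyclic graph -/
lemma acyclic_of_no_cycle {G : SimpleGraph W} {A : Set (Sym2 W)} (hA : A ⊆ G.edgeSet)
    (h : ∀ C, IsCycleEdgeSet G C → ¬ C ⊆ A) : (SimpleGraph.fromEdgeSet A).IsAcyclic := by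
  intro v c hc
  have hsub : ∀ e ∈ c.edges, e ∈ G.edgeSet := by
    intro e he
    have := c.edges_subset_edgeSet he
    rw [SimpleGraph.edgeSet_fromEdgeSet] at this
    exact hA this.1
  refine h {e | e ∈ (c.transfer G hsub).edges} ⟨v, c.transfer G hsub, hc.transfer _, rfl⟩ ?_
  intro e he
  simp only [Set.mem_setOf_eq, SimpleGraph.Walk.edges_transfer] at he
  have := c.edges_subset_edgeSet he
  rw [SimpleGraph.edgeSet_fromEdgeSet] at this
  exact this.1

/-- a "maximal acyclic" edge set connects everything that `G` connects. -/
lemma base_reachable {G : SimpleGraph W} {T : Set (Sym2 W)}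
    (hmax : ∀ e ∈ G.edgeSet, e ∉ T → ∃ C, IsCycleEdgeSet G C ∧ e ∈ C ∧ C ⊆ insert e T)
    {u v : W} (h : G.Reachable u v) : (SimpleGraph.fromEdgeSet T).Reachable u v := by
  have adjcase : ∀ {a b : W}, G.Adj a b → (SimpleGraph.fromEdgeSet T).Reachable a b := by
    intro a b hab
    by_cases he : s(a, b) ∈ T
    · exact (SimpleGraph.Adj.reachable ((SimpleGraph.fromEdgeSet_adj _).mpr ⟨he, hab.ne⟩))
    · obtain ⟨C, ⟨x, w, hw, hCeq⟩, heC, hCsub⟩ := hmax _ hab he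
      set H := SimpleGraph.fromEdgeSet (insert (s(a, b)) T) with hH
      have hsub : ∀ e' ∈ w.edges, e' ∈ H.edgeSet := by
        intro e' he'
        rw [hH, SimpleGraph.edgeSet_fromEdgeSet]
        have h1 : e' ∈ C := by rw [hCeq]; exact he'
        exact ⟨hCsub h1, G.not_isDiag_of_mem_edgeSet (w.edges_subset_edgeSet he')⟩
      have hcycle : ∃ (y : W) (p : H.Walk y y), p.IsCycle ∧ s(a, b) ∈ p.edges :=
        ⟨x, w.transfer H hsub, hw.transfer _, by
          rw [SimpleGraph.Walk.edges_transfer]; rw [hCeq] at heC; exact heC⟩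
      have hreach : (H \ SimpleGraph.fromEdgeSet {s(a, b)}).Reachable a b :=
        ((SimpleGraph.adj_and_reachable_delete_edges_iff_exists_cycle).mpr hcycle).2
      refine hreach.mono ?_
      intro x y hxy
      simp only [SimpleGraph.sdiff_adj, SimpleGraph.fromEdgeSet_adj] at hxy
      obtain ⟨⟨hmem, hne⟩, hnotdel⟩ := hxy
      refine (SimpleGraph.fromEdgeSet_adj _).mpr ⟨?_, hne⟩
      rcases Set.mem_insert_iff.mp hmem with heq | hmem'
      · exact absurd ⟨heq, hne⟩ hnotdel
      · exact hmem'
  obtain ⟨p⟩ := h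
  induction p with
  | nil => exact SimpleGraph.Reachable.refl _
  | cons h' q ih => exact (adjcase h').trans ih

end Helpers

/-- Let `G` be a 2-connected finitely separable graph with finite-cycle
matroid `M` and `k ≥ 1`. If `(X, Y)` is a `k`-Tutte-separation of `G`, then
`κ_M(X) ≤ k - 1`; in particular `(X, Y)` is a `k`-separation of `M`. -/
theorem tutteSep_gives_matSep {V : Type*} (G : SimpleGraph V) (h2 : TwoConnected G)
    (hfs : FinitelySeparable G) (M : Matroid (Sym2 V)) (hM : IsFiniteCycleMatroid G M)
    (k : ℕ) (hk : 1 ≤ k) (X Y : Set (Sym2 V)) (hts : TutteSep G k X Y) :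
    (∀ F, ConnWitness M X F → F.encard + 1 ≤ (k : ℕ∞)) ∧ MatSep M k X Y := by
  classical
  obtain ⟨hME, hInd⟩ := hM
  obtain ⟨hXY, hdisj, hXk, hYk, hS⟩ := hts
  have hGconn : G.Connected := h2.1
  have hnd : ∀ e ∈ G.edgeSet, ¬ e.IsDiag := fun e he => G.not_isDiag_of_mem_edgeSet he
  have main : ∀ Fw, ConnWitness M X Fw →
      ∀ F₀, F₀ ⊆ Fw → F₀.Finite → F₀.Nonempty → F₀.ncard + 1 ≤ k := by
    rintro Fw ⟨B, B', hB, hB', hFsub, hTbase⟩ F₀ hF₀F hF₀fin hF₀ne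
    have hBindep : M.Indep B ∧ B ⊆ X := Matroid.restrict_indep_iff.mp hB.indep
    have hB'indep : M.Indep B' ∧ B' ⊆ M.E \ X := Matroid.restrict_indep_iff.mp hB'.indep
    set T : Set (Sym2 V) := (B ∪ B') \ Fw with hTdef
    have hTindep : M.Indep T := hTbase.indep
    have hBB'E : B ∪ B' ⊆ G.edgeSet := by
      rw [← hME]
      exact Set.union_subset hBindep.1.subset_ground hB'indep.1.subset_ground
    have hTE : T ⊆ G.edgeSet := (Set.diff_subset).trans hBB'E
    have indep_nocyc : ∀ {I}, M.Indep I → ∀ C, IsCycleEdgeSet G C → ¬ C ⊆ I :=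
      fun {I} hI => ((hInd I).mp hI).2
    have hmax : ∀ e ∈ G.edgeSet, e ∉ T → ∃ C, IsCycleEdgeSet G C ∧ e ∈ C ∧ C ⊆ insert e T := by
      intro e heE heT
      have hdep : M.Dep (insert e T) := hTbase.insert_dep ⟨hME ▸ heE, heT⟩
      have hnind : ¬ M.Indep (insert e T) := hdep.not_indep
      have hsubE : insert e T ⊆ G.edgeSet := Set.insert_subset heE hTE
      have hex : ∃ C, IsCycleEdgeSet G C ∧ C ⊆ insert e T := by
        by_contra hcon
        push_neg at hcon
        exact hnind ((hInd _).mpr ⟨hsubE, fun C hC => hcon C hC⟩)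
      obtain ⟨C, hC, hCsub⟩ := hex
      refine ⟨C, hC, ?_, hCsub⟩
      by_contra heC
      refine indep_nocyc hTindep C hC (fun x hx => ?_)
      rcases Set.mem_insert_iff.mp (hCsub hx) with rfl | h
      · exact absurd hx heC
      · exact h
    have hT_acyclic : (SimpleGraph.fromEdgeSet T).IsAcyclic :=
      acyclic_of_no_cycle hTE (indep_nocyc hTindep)
    have treach : ∀ u v : V, (SimpleGraph.fromEdgeSet T).Reachable u v :=
      fun u v => base_reachable hmax (hGconn.preconnected u v)
    have hFE : ∀ f ∈ Fw, f ∈ G.edgeSet := fun f hf => hBB'E (hFsub hf)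
    have hcyc0 : ∀ f : Sym2 V, ∃ C, f ∈ F₀ →
        IsCycleEdgeSet G C ∧ f ∈ C ∧ C ⊆ insert f T ∧ C.Finite := by
      intro f
      by_cases hf : f ∈ F₀
      · obtain ⟨C, hC, hfC, hCsub⟩ := hmax f (hFE f (hF₀F hf)) (fun h => h.2 (hF₀F hf))
        refine ⟨C, fun _ => ⟨hC, hfC, hCsub, ?_⟩⟩
        obtain ⟨v, w, hw, rfl⟩ := hC
        exact w.edges.finite_toSet
      · exact ⟨∅, fun h => absurd h hf⟩
    choose Cf hCf using hcyc0
    set U₀ : Set (Sym2 V) := ⋃ f ∈ F₀, Cf f with hU₀def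
    have hU₀fin : U₀.Finite := hF₀fin.biUnion (fun f hf => (hCf f hf).2.2.2)
    have hF₀U₀ : F₀ ⊆ U₀ := fun f hf => Set.mem_biUnion hf (hCf f hf).2.1
    have hU₀sub : U₀ ⊆ B ∪ B' := by
      intro e he
      obtain ⟨f, hf, heC⟩ := Set.mem_iUnion₂.mp he
      rcases Set.mem_insert_iff.mp ((hCf f hf).2.2.1 heC) with rfl | h
      · exact hFsub (hF₀F hf)
      · exact h.1
    have hU₀T : ∀ e ∈ U₀, e ∉ F₀ → e ∈ T := by
      intro e he hef
      obtain ⟨f, hf, heC⟩ := Set.mem_iUnion₂.mp he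
      rcases Set.mem_insert_iff.mp ((hCf f hf).2.2.1 heC) with rfl | h
      · exact absurd hf hef
      · exact h
    set D := vertsOf U₀ with hDdef
    have hDfin : D.Finite := vertsOf_finite_s11 hU₀fin
    have hD2 : ∀ u ∈ D, ∃ v ∈ D, v ≠ u := by
      rintro u ⟨e, he, hu⟩
      have heE : e ∈ G.edgeSet := hBB'E (hU₀sub he)
      induction e with
      | h a b =>
        have hab : a ≠ b := by
          have := hnd _ heE
          simpa [Sym2.isDiag_iff_proj_eq] using this
        rcases Sym2.mem_iff.mp hu with rfl | rfl
        · exact ⟨b, ⟨_, he, Sym2.mem_mk_right _ _⟩, hab.symm⟩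
        · exact ⟨a, ⟨_, he, Sym2.mem_mk_left _ _⟩, hab⟩
    have hpT0 : ∀ u v : V, ∃ p : (SimpleGraph.fromEdgeSet T).Walk u v, p.IsPath :=
      fun u v => ⟨(treach u v).some.toPath, (treach u v).some.toPath.2⟩
    choose pT hpT using hpT0
    set T₁ : Set (Sym2 V) := ⋃ u ∈ D, ⋃ v ∈ D, {e | e ∈ (pT u v).edges} with hT₁def
    have hT₁fin : T₁.Finite :=
      hDfin.biUnion (fun u _ => hDfin.biUnion (fun v _ => (pT u v).edges.finite_toSet))
    have hmemT₁ : ∀ u ∈ D, ∀ v ∈ D, ∀ e ∈ (pT u v).edges, e ∈ T₁ := by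
      intro u hu v hv e he
      rw [hT₁def]
      exact Set.mem_iUnion₂.mpr ⟨u, hu, Set.mem_iUnion₂.mpr ⟨v, hv, he⟩⟩
    have hT₁T : T₁ ⊆ T := by
      intro e he
      rw [hT₁def] at he
      obtain ⟨u, hu, hrest⟩ := Set.mem_iUnion₂.mp he
      obtain ⟨v, hv, he'⟩ := Set.mem_iUnion₂.mp hrest
      have := (pT u v).edges_subset_edgeSet he'
      rw [SimpleGraph.edgeSet_fromEdgeSet] at this
      exact this.1
    have hDT₁ : D ⊆ vertsOf T₁ := by
      intro u hu
      obtain ⟨v, hv, hvu⟩ := hD2 u hu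
      obtain ⟨e, he, hue⟩ := walk_exists_start_edge (pT u v) (Ne.symm hvu)
      exact ⟨e, hmemT₁ u hu v hv e he, hue⟩
    have hTedge : ∀ e ∈ T, ∀ a b : V, e = s(a, b) → a ∈ D → b ∈ D → e ∈ T₁ := by
      intro e heT a b heq ha hb
      have hab : a ≠ b := by
        have := hnd _ (hTE heT)
        rw [heq] at this
        simpa [Sym2.isDiag_iff_proj_eq] using this
      have hadj : (SimpleGraph.fromEdgeSet T).Adj a b :=
        (SimpleGraph.fromEdgeSet_adj _).mpr ⟨heq ▸ heT, hab⟩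
      have huniq : (⟨pT a b, hpT a b⟩ : (SimpleGraph.fromEdgeSet T).Path a b)
          = SimpleGraph.Path.singleton hadj := hT_acyclic.path_unique _ _
      have hmem : e ∈ (pT a b).edges := by
        have := congrArg (fun p : (SimpleGraph.fromEdgeSet T).Path a b => p.1.edges) huniq
        simp only [SimpleGraph.Path.singleton] at this
        rw [this, heq]
        simp
      exact hmemT₁ a ha b hb e hmem
    set Wset : Set (Sym2 V) := U₀ ∪ T₁ with hWdef
    have hWfin : Wset.Finite := hU₀fin.union hT₁fin
    have hWsub : Wset ⊆ B ∪ B' := Set.union_subset hU₀sub (hT₁T.trans Set.diff_subset)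
    have hWE : Wset ⊆ G.edgeSet := hWsub.trans hBB'E
    have hVW : vertsOf Wset = vertsOf T₁ := by
      rw [hWdef, vertsOf_union_s11]
      exact Set.union_eq_self_of_subset_left hDT₁
    obtain ⟨f₀, hf₀⟩ := hF₀ne
    have hC₀ := hCf f₀ hf₀
    have hC₀U₀ : Cf f₀ ⊆ U₀ := fun e he => Set.mem_biUnion hf₀ he
    have hu₀ : ∃ u₀, u₀ ∈ D := by
      have hf₀U : f₀ ∈ U₀ := hF₀U₀ hf₀
      induction f₀ with
      | h a b => exact ⟨a, s(a, b), hf₀U, Sym2.mem_mk_left _ _⟩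
    obtain ⟨u₀, hu₀D⟩ := hu₀
    have hsubT₁ : ∀ u, u ∈ D → ∀ v, v ∈ D → ∀ e' ∈ (pT u v).edges,
        e' ∈ (SimpleGraph.fromEdgeSet T₁).edgeSet := by
      intro u hu v hv e' he'
      rw [SimpleGraph.edgeSet_fromEdgeSet]
      refine ⟨hmemT₁ u hu v hv e' he', ?_⟩
      have := (pT u v).edges_subset_edgeSet he'
      rw [SimpleGraph.edgeSet_fromEdgeSet] at this
      exact this.2
    have hT₁conn : ∀ a ∈ vertsOf T₁, (SimpleGraph.fromEdgeSet T₁).Reachable a u₀ := by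
      rintro a ⟨e, heT₁, hae⟩
      rw [hT₁def] at heT₁
      obtain ⟨u, hu, hrest⟩ := Set.mem_iUnion₂.mp heT₁
      obtain ⟨v, hv, he⟩ := Set.mem_iUnion₂.mp hrest
      have hasup : a ∈ ((pT u v).transfer (SimpleGraph.fromEdgeSet T₁)
          (fun e' he' => hsubT₁ u hu v hv e' he')).support := by
        rw [SimpleGraph.Walk.support_transfer]
        exact mem_support_of_mem_edges' he hae
      have h1 : (SimpleGraph.fromEdgeSet T₁).Reachable u a :=
        ⟨((pT u v).transfer (SimpleGraph.fromEdgeSet T₁)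
          (fun e' he' => hsubT₁ u hu v hv e' he')).takeUntil a hasup⟩
      exact h1.symm.trans ⟨(pT u u₀).transfer (SimpleGraph.fromEdgeSet T₁)
        (fun e' he' => hsubT₁ u hu u₀ hu₀D e' he')⟩
    have n3 : (vertsOf T₁).ncard ≤ T₁.ncard + 1 :=
      lemB hT₁fin (vertsOf_finite_s11 hT₁fin) (hDT₁ hu₀D) hT₁conn
    set A₁ : Set (Sym2 V) := Wset ∩ X with hA₁def
    set A₂ : Set (Sym2 V) := Wset ∩ Y with hA₂def
    have hA₁B : A₁ ⊆ B := by
      rintro e ⟨heW, heX⟩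
      rcases hWsub heW with h | h
      · exact h
      · exact absurd heX (hB'indep.2 h).2
    have hA₂B' : A₂ ⊆ B' := by
      rintro e ⟨heW, heY⟩
      rcases hWsub heW with h | h
      · exact absurd heY (Set.disjoint_left.mp hdisj (hBindep.2 h))
      · exact h
    have hC₀subBB' : Cf f₀ ⊆ B ∪ B' := hC₀U₀.trans hU₀sub
    have hnotX : ¬ Cf f₀ ⊆ X := by
      intro hsubX
      refine indep_nocyc hBindep.1 _ hC₀.1 (fun e he => ?_)
      rcases hC₀subBB' he with h | h
      · exact h
      · exact absurd (hsubX he) (hB'indep.2 h).2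
    have hnotY : ¬ Cf f₀ ⊆ Y := by
      intro hsubY
      refine indep_nocyc hB'indep.1 _ hC₀.1 (fun e he => ?_)
      rcases hC₀subBB' he with h | h
      · exact absurd (hsubY he) (Set.disjoint_left.mp hdisj (hBindep.2 h))
      · exact h
    have hA₁ne : A₁.Nonempty := by
      obtain ⟨e, he, heY'⟩ := Set.not_subset.mp hnotY
      have heE : e ∈ G.edgeSet := hBB'E (hC₀subBB' he)
      rw [← hXY] at heE
      rcases heE with heX | heY
      · exact ⟨e, Set.mem_union_left _ (hC₀U₀ he), heX⟩
      · exact absurd heY heY'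
    have hA₂ne : A₂.Nonempty := by
      obtain ⟨e, he, heX'⟩ := Set.not_subset.mp hnotX
      have heE : e ∈ G.edgeSet := hBB'E (hC₀subBB' he)
      rw [← hXY] at heE
      rcases heE with heX | heY
      · exact absurd heX heX'
      · exact ⟨e, Set.mem_union_left _ (hC₀U₀ he), heY⟩
    have hA₁fin : A₁.Finite := hWfin.subset Set.inter_subset_left
    have hA₂fin : A₂.Finite := hWfin.subset Set.inter_subset_left
    have hA₁E : A₁ ⊆ G.edgeSet := Set.inter_subset_left.trans hWE
    have hA₂E : A₂ ⊆ G.edgeSet := Set.inter_subset_left.trans hWE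
    have n1 : A₁.ncard + 1 ≤ (vertsOf A₁).ncard :=
      lemA hA₁fin hA₁ne (fun e he => hnd _ (hA₁E he)) (vertsOf_finite_s11 hA₁fin)
        (acyclic_of_no_cycle hA₁E (indep_nocyc (hBindep.1.subset hA₁B)))
    have n2 : A₂.ncard + 1 ≤ (vertsOf A₂).ncard :=
      lemA hA₂fin hA₂ne (fun e he => hnd _ (hA₂E he)) (vertsOf_finite_s11 hA₂fin)
        (acyclic_of_no_cycle hA₂E (indep_nocyc (hB'indep.1.subset hA₂B')))
    have hWsplit : A₁ ∪ A₂ = Wset := by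
      rw [hA₁def, hA₂def, ← Set.inter_union_distrib_left, hXY]
      exact Set.inter_eq_self_of_subset_left hWE
    have hA₁A₂dis : Disjoint A₁ A₂ :=
      hdisj.mono Set.inter_subset_right Set.inter_subset_right
    have n7 : A₁.ncard + A₂.ncard = Wset.ncard := by
      rw [← Set.ncard_union_eq hA₁A₂dis hA₁fin hA₂fin, hWsplit]
    have n5 : (vertsOf A₁ ∪ vertsOf A₂).ncard = (vertsOf T₁).ncard := by
      rw [← vertsOf_union_s11, hWsplit, hVW]
    have n4 := Set.ncard_union_add_ncard_inter (vertsOf A₁) (vertsOf A₂)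
      (vertsOf_finite_s11 hA₁fin) (vertsOf_finite_s11 hA₂fin)
    have hT₁W : T₁ ⊆ Wset := Set.subset_union_right
    have hF₀T₁ : ∀ e ∈ F₀, e ∉ T₁ := fun e he ht => (hT₁T ht).2 (hF₀F he)
    have hWdiff : Wset \ T₁ = F₀ := by
      apply Set.eq_of_subset_of_subset
      · rintro e ⟨heW, heT₁⟩
        rcases heW with heU | heT1
        swap
        · exact absurd heT1 heT₁
        by_contra hef₀
        have heT : e ∈ T := hU₀T e heU hef₀
        have habs : e ∈ T₁ := by
          induction e with
          | h a b =>
            exact hTedge _ heT a b rfl ⟨s(a, b), heU, Sym2.mem_mk_left _ _⟩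
              ⟨s(a, b), heU, Sym2.mem_mk_right _ _⟩
        exact heT₁ habs
      · intro e he
        exact ⟨Set.mem_union_left _ (hF₀U₀ he), hF₀T₁ e he⟩
    have hT₁cardle : T₁.ncard ≤ Wset.ncard := Set.ncard_le_ncard hT₁W hWfin
    have n8 : F₀.ncard = Wset.ncard - T₁.ncard := by
      rw [← hWdiff]
      exact Set.ncard_diff hT₁W hT₁fin
    have hSfin : (vertsOf X ∩ vertsOf Y).Finite := Set.finite_of_encard_le_coe hS
    have hSk : (vertsOf X ∩ vertsOf Y).ncard ≤ k :=
      ((Set.encard_le_coe_iff_finite_ncard_le).mp hS).2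
    have hSW : vertsOf A₁ ∩ vertsOf A₂ ⊆ vertsOf X ∩ vertsOf Y :=
      Set.inter_subset_inter (vertsOf_mono_s11 Set.inter_subset_right)
        (vertsOf_mono_s11 Set.inter_subset_right)
    have n9 : (vertsOf A₁ ∩ vertsOf A₂).ncard ≤ k :=
      le_trans (Set.ncard_le_ncard hSW hSfin) hSk
    omega
  have main2 : ∀ Fw, ConnWitness M X Fw → Fw.encard + 1 ≤ (k : ℕ∞) := by
    intro Fw hw
    by_cases hfin : Fw.Finite
    · rcases Fw.eq_empty_or_nonempty with rfl | hne
      · rw [Set.encard_empty, zero_add]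
        exact_mod_cast hk
      · have h := main Fw hw Fw subset_rfl hfin hne
        rw [← hfin.cast_ncard_eq]
        have : ((Fw.ncard : ℕ∞) + 1) = ((Fw.ncard + 1 : ℕ) : ℕ∞) := by push_cast; ring
        rw [this]
        exact_mod_cast h
    · exfalso
      have hinf : Fw.Infinite := hfin
      obtain ⟨F₀, hsub, hfin₀, hcard⟩ := hinf.exists_subset_ncard_eq k
      have hne : F₀.Nonempty := Set.nonempty_of_ncard_ne_zero (by omega)
      have := main Fw hw F₀ hsub hfin₀ hne
      omega
  refine ⟨main2, ?_, hdisj, hXk, hYk, main2⟩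
  rw [hXY, hME]
end

section
/- Let M be a (possibly infinite) matroid with ground set E, let M* be its dual matroid, and let X ⊆ E. Then κ_M(X) = κ_{M*}(X). Concretely: if B is a base of M|X, B' a base of M|(E∖X), and F ⊆ B ∪ B' is such that (B ∪ B') ∖ F is a base of M, and likewise B₁ is a base of M*|X, B₁' a base of M*|(E∖X), and F₁ ⊆ B₁ ∪ B₁' is such that (B₁ ∪ B₁') ∖ F₁ is a base of M*, then F is finite if and only if F₁ is finite, and in that case |F| = |F₁|. -/
open scoped Matroid

variable {V : Type*} {α : Type*}

section KappaDualAux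

open Set Matroid

/-- Two bases of `M` inside the same set `S` leave equally many elements uncovered. -/
lemma kd_nullity_eq {M : Matroid α} {S J₁ J₂ : Set α} (h₁ : M.IsBase J₁) (h₂ : M.IsBase J₂)
    (hJ₁ : J₁ ⊆ S) (hJ₂ : J₂ ⊆ S) : (S \ J₁).encard = (S \ J₂).encard := by
  have hsplit : ∀ (A B : Set α), B ⊆ S → S \ A = (B \ A) ∪ (S \ (A ∪ B)) := by
    intro A B hBS
    ext x
    constructor
    · rintro ⟨hxS, hxA⟩
      by_cases hxB : x ∈ B
      · exact Or.inl ⟨hxB, hxA⟩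
      · exact Or.inr ⟨hxS, fun h => h.elim hxA hxB⟩
    · rintro (⟨hxB, hxA⟩ | ⟨hxS, hx⟩)
      · exact ⟨hBS hxB, hxA⟩
      · exact ⟨hxS, fun h => hx (Or.inl h)⟩
  have hdisj : ∀ (A B : Set α), Disjoint (B \ A) (S \ (A ∪ B)) := by
    intro A B
    rw [Set.disjoint_left]
    rintro x ⟨hxB, _⟩ ⟨_, hx⟩
    exact hx (Or.inr hxB)
  rw [hsplit J₁ J₂ hJ₂, hsplit J₂ J₁ hJ₁, Set.encard_union_eq (hdisj _ _),
    Set.encard_union_eq (hdisj _ _), h₂.encard_sdiff_comm h₁, Set.union_comm]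

/-- Key lemma: defects over `B ∪ I` and `C ∪ I` agree when `B, C` are both bases of `X`. -/
lemma kd_key {M : Matroid α} {X I B C J J' : Set α} (hB : M.IsBasis B X) (hC : M.IsBasis C X)
    (hIE : I ⊆ M.E) (hdj : Disjoint X I)
    (hJ : M.IsBase J) (hJBI : J ⊆ B ∪ I) (hJ' : M.IsBase J') (hJ'CI : J' ⊆ C ∪ I) :
    ((B ∪ I) \ J).encard = ((C ∪ I) \ J').encard := by
  have hBE : B ⊆ M.E := hB.indep.subset_ground
  have hCE : C ⊆ M.E := hC.indep.subset_ground
  obtain ⟨T, hT, hBT⟩ := hB.indep.subset_isBasis_of_subset (subset_union_left (s := B) (t := I))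
    (union_subset hBE hIE)
  have hTsub : T ⊆ B ∪ I := hT.subset
  set K := T \ B with hK
  have hTBK : T = B ∪ K := by rw [hK, union_diff_cancel hBT]
  have hKI : K ⊆ I := fun x hx => (hTsub hx.1).resolve_left hx.2
  have hKE : K ⊆ M.E := hKI.trans hIE
  -- T is a base of M
  have hclT : M.closure T = M.E := by
    rw [hT.closure_eq_closure]
    refine subset_antisymm (M.closure_subset_ground _) ?_
    rw [← hJ.closure_eq]
    exact M.closure_subset_closure hJBI
  have hTbase : M.IsBase T := hT.indep.isBase_of_ground_subset_closure hclT.symm.subset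
  -- closure-swap : closure (C ∪ A) = closure (B ∪ A)
  have hswap : ∀ A : Set α, M.closure (C ∪ A) = M.closure (B ∪ A) := by
    intro A
    rw [← closure_union_closure_left_eq, hC.closure_eq_closure, ← hB.closure_eq_closure,
      closure_union_closure_left_eq]
  -- C ∪ K is independent
  obtain ⟨W, hW, hCW⟩ := hC.indep.subset_isBasis_of_subset (subset_union_left (s := C) (t := K))
    (union_subset hCE hKE)
  have hKW : K ⊆ W := by
    intro x hxK
    by_contra hxW
    have hxT : x ∈ T := hTBK ▸ Or.inr hxK
    have hxB : x ∉ B := hxK.2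
    have hWsub : W ⊆ C ∪ (K \ {x}) := by
      intro y hy
      rcases hW.subset hy with hyC | hyK
      · exact Or.inl hyC
      · exact Or.inr ⟨hyK, fun h => hxW (h ▸ hy)⟩
    have hx1 : x ∈ M.closure W := hW.subset_closure (Or.inr hxK)
    have hx2 : x ∈ M.closure (T \ {x}) := by
      have s1 : x ∈ M.closure (C ∪ (K \ {x})) := M.closure_subset_closure hWsub hx1
      rw [hswap (K \ {x})] at s1
      refine M.closure_subset_closure ?_ s1
      rw [hTBK]
      rintro y (hyB | hyK)
      · exact ⟨Or.inl hyB, fun h => hxB (h ▸ hyB)⟩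
      · exact ⟨Or.inr hyK.1, fun h => hyK.2 (h ▸ rfl)⟩
    exact hT.indep.notMem_closure_sdiff_of_mem hxT hx2
  have hWeq : W = C ∪ K := subset_antisymm hW.subset (union_subset hCW hKW)
  have hCK_indep : M.Indep (C ∪ K) := hWeq ▸ hW.indep
  have hCK_base : M.IsBase (C ∪ K) := by
    refine hCK_indep.isBase_of_ground_subset_closure ?_
    rw [hswap K, ← hTBK, hclT]
  have hIB : Disjoint I B := (hdj.mono_left hB.subset).symm
  have hIC : Disjoint I C := (hdj.mono_left hC.subset).symm
  have e1 : (B ∪ I) \ T = I \ K := by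
    rw [hTBK]
    ext x
    constructor
    · rintro ⟨hx | hx, hxn⟩
      · exact absurd (Or.inl hx) hxn
      · exact ⟨hx, fun h => hxn (Or.inr h)⟩
    · rintro ⟨hxI, hxK⟩
      exact ⟨Or.inr hxI, fun h => h.elim (fun hB' => hIB.le_bot ⟨hxI, hB'⟩) hxK⟩
  have e2 : (C ∪ I) \ (C ∪ K) = I \ K := by
    ext x
    constructor
    · rintro ⟨hx | hx, hxn⟩
      · exact absurd (Or.inl hx) hxn
      · exact ⟨hx, fun h => hxn (Or.inr h)⟩
    · rintro ⟨hxI, hxK⟩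
      exact ⟨Or.inr hxI, fun h => h.elim (fun hC' => hIC.le_bot ⟨hxI, hC'⟩) hxK⟩
  rw [kd_nullity_eq hJ hTbase hJBI hTsub, e1,
    kd_nullity_eq hJ' hCK_base hJ'CI
      (union_subset subset_union_left (hKI.trans subset_union_right)), e2]

/-- Any two `ConnWitness`es of the same matroid and set have the same cardinality. -/
lemma kd_connWitness_encard_eq {M : Matroid α} {X F G : Set α} (hX : X ⊆ M.E)
    (hF : ConnWitness M X F) (hG : ConnWitness M X G) : F.encard = G.encard := by
  obtain ⟨B, B', hBr, hB'r, hFsub, hFbase⟩ := hF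
  obtain ⟨C, C', hCr, hC'r, hGsub, hGbase⟩ := hG
  have hB : M.IsBasis B X := (isBase_restrict_iff hX).1 hBr
  have hC : M.IsBasis C X := (isBase_restrict_iff hX).1 hCr
  have hB' : M.IsBasis B' (M.E \ X) := (isBase_restrict_iff diff_subset).1 hB'r
  have hC' : M.IsBasis C' (M.E \ X) := (isBase_restrict_iff diff_subset).1 hC'r
  have hB'E : B' ⊆ M.E := hB'.indep.subset_ground
  have hCE : C ⊆ M.E := hC.indep.subset_ground
  -- a base inside C ∪ B'
  have hsp : M.Spanning (C ∪ B') := by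
    rw [spanning_iff_ground_subset_closure (union_subset hCE hB'E)]
    rw [← closure_union_closure_left_eq, hC.closure_eq_closure,
      closure_union_closure_left_eq, ← closure_union_closure_right_eq,
      hB'.closure_eq_closure, closure_union_closure_right_eq,
      union_diff_cancel hX, closure_ground]
  obtain ⟨J'', hJ'', hJ''sub⟩ := hsp.exists_isBase_subset
  have hdisjX : Disjoint X (M.E \ X) := disjoint_sdiff_right
  have step1 : ((B ∪ B') \ ((B ∪ B') \ F)).encard = ((C ∪ B') \ J'').encard :=
    kd_key hB hC (hB'.subset.trans diff_subset) (hdisjX.mono_right hB'.subset)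
      hFbase diff_subset hJ'' hJ''sub
  have step2 : ((B' ∪ C) \ J'').encard = ((C' ∪ C) \ ((C ∪ C') \ G)).encard :=
    kd_key hB' hC' hCE (hdisjX.symm.mono_right hC.subset)
      hJ'' (by rwa [union_comm]) hGbase (by rw [union_comm]; exact diff_subset)
  rw [diff_diff_cancel_left hFsub] at step1
  rw [union_comm C' C, diff_diff_cancel_left hGsub] at step2
  rw [step1, union_comm C B', step2]

/-- Complement (in `X`) of the `X`-part of a base that contains a basis of `M.E \ X`
is a dual basis of `X`. -/
lemma kd_dual_basis {M : Matroid α} {X D B' : Set α} (hX : X ⊆ M.E)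
    (hB' : M.IsBasis B' (M.E \ X)) (hD : D ⊆ X) (hbase : M.IsBase (D ∪ B')) :
    M✶.IsBasis (X \ D) X := by
  have hB'E : B' ⊆ M.E := hB'.indep.subset_ground
  have hDB' : Disjoint D B' := (disjoint_sdiff_right.mono_left hD).mono_right hB'.subset
  refine Indep.isBasis_of_forall_insert ?_ diff_subset ?_
  · rw [dual_indep_iff_exists (diff_subset.trans hX)]
    exact ⟨D ∪ B', hbase, by
      rw [Set.disjoint_left]
      rintro x ⟨hxX, hxD⟩ (hx | hx)
      · exact hxD hx
      · exact (disjoint_sdiff_right.mono_right hB'.subset).le_bot ⟨hxX, hx⟩⟩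
  · rintro e ⟨heX, heND⟩
    have heD : e ∈ D := by
      by_contra h
      exact heND ⟨heX, h⟩
    rw [Matroid.Dep, dual_ground]
    refine ⟨fun hind => ?_, insert_subset (hX heX) (diff_subset.trans hX)⟩
    rw [dual_indep_iff_exists (insert_subset (hX heX) (diff_subset.trans hX))] at hind
    obtain ⟨W, hW, hWdisj⟩ := hind
    have hWsub : W ⊆ (D \ {e}) ∪ (M.E \ X) := by
      intro y hy
      by_cases hyX : y ∈ X
      · refine Or.inl ⟨?_, ?_⟩
        · by_contra hyD
          exact (hWdisj.symm.le_bot ⟨hy, Or.inr ⟨hyX, hyD⟩⟩)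
        · rintro rfl
          exact hWdisj.symm.le_bot ⟨hy, Or.inl rfl⟩
      · exact Or.inr ⟨hW.subset_ground hy, hyX⟩
    have hcl : M.closure ((D \ {e}) ∪ (M.E \ X)) ⊆ M.closure ((D ∪ B') \ {e}) := by
      rw [← closure_union_closure_right_eq, ← hB'.closure_eq_closure,
        closure_union_closure_right_eq]
      refine M.closure_subset_closure ?_
      rintro y (⟨hyD, hye⟩ | hyB')
      · exact ⟨Or.inl hyD, hye⟩
      · exact ⟨Or.inr hyB', fun h => hDB'.le_bot ⟨h ▸ heD, hyB'⟩⟩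
    have he1 : e ∈ M.closure ((D ∪ B') \ {e}) := by
      refine hcl (M.closure_subset_closure hWsub ?_)
      rw [hW.closure_eq]
      exact hX heX
    exact hbase.indep.notMem_closure_sdiff_of_mem (Or.inl heD) he1

/-- There exist witnesses for `M` and `M✶` of the same cardinality. -/
lemma kd_exists_pair (M : Matroid α) (X : Set α) (hX : X ⊆ M.E) :
    ∃ F₀ F₁, ConnWitness M X F₀ ∧ ConnWitness M✶ X F₁ ∧ F₀.encard = F₁.encard := by
  obtain ⟨B, hB⟩ := M.exists_isBasis X
  obtain ⟨J, hJ, hBJ⟩ := hB.indep.exists_isBase_superset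
  have hBX : B ⊆ X := hB.subset
  have hJE : J ⊆ M.E := hJ.subset_ground
  have hBeq : J ∩ X = B :=
    (hB.eq_of_subset_indep (hJ.indep.subset inter_subset_left)
      (subset_inter hBJ hBX) inter_subset_right).symm
  set B'' := J \ X with hB''def
  have hB''Y : B'' ⊆ M.E \ X := fun x hx => ⟨hJE hx.1, hx.2⟩
  obtain ⟨B', hB', hB''B'⟩ := (hJ.indep.subset diff_subset).subset_isBasis_of_subset hB''Y
  have hB'Y : B' ⊆ M.E \ X := hB'.subset
  have hJeq : J = B ∪ B'' := by rw [hB''def, ← hBeq, inter_union_diff]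
  have hBE : B ⊆ M.E := hBX.trans hX
  have hB'E : B' ⊆ M.E := hB'Y.trans diff_subset
  have hdisjBB' : Disjoint B B' := Set.disjoint_left.2 fun x hxB hxB' => (hB'Y hxB').2 (hBX hxB)
  have hdisjBB'' : Disjoint B B'' := Set.disjoint_left.2 fun x hxB hxB'' => hxB''.2 (hBX hxB)
  -- a base W with B' ⊆ W ⊆ B ∪ B'
  have hsp : M.Spanning (B ∪ B') := by
    rw [spanning_iff_ground_subset_closure (union_subset hBE hB'E)]
    rw [← closure_union_closure_left_eq, hB.closure_eq_closure,
      closure_union_closure_left_eq, ← closure_union_closure_right_eq,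
      hB'.closure_eq_closure, closure_union_closure_right_eq,
      union_diff_cancel hX, closure_ground]
  obtain ⟨W, hWbasis, hB'W⟩ := hB'.indep.subset_isBasis_of_subset
    (subset_union_right (s := B) (t := B')) (union_subset hBE hB'E)
  have hWbase : M.IsBase W := by
    refine hWbasis.indep.isBase_of_ground_subset_closure ?_
    rw [hWbasis.closure_eq_closure, hsp.closure_eq]
  set D := W \ B' with hDdef
  have hWeq : W = D ∪ B' := by rw [hDdef, diff_union_of_subset hB'W]
  have hDB : D ⊆ B := fun x hx => (hWbasis.subset hx.1).resolve_right hx.2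
  have hDX : D ⊆ X := hDB.trans hBX
  -- counting : (B \ D).encard = (B' \ B'').encard
  have hcount : (B' \ B'').encard = (B \ D).encard := by
    have h := hWbase.encard_sdiff_comm hJ
    have e1 : W \ J = B' \ B'' := by
      rw [hWeq, hJeq]
      ext x
      constructor
      · rintro ⟨hx | hx, hxn⟩
        · exact absurd (Or.inl (hDB hx)) hxn
        · exact ⟨hx, fun h' => hxn (Or.inr h')⟩
      · rintro ⟨hxB', hxB''⟩
        exact ⟨Or.inr hxB', fun h' =>
          h'.elim (fun hxB => hdisjBB'.le_bot ⟨hxB, hxB'⟩) hxB''⟩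
    have e2 : J \ W = B \ D := by
      rw [hWeq, hJeq]
      ext x
      constructor
      · rintro ⟨hx | hx, hxn⟩
        · exact ⟨hx, fun h' => hxn (Or.inl h')⟩
        · exact absurd (Or.inr (hB''B' hx)) hxn
      · rintro ⟨hxB, hxD⟩
        exact ⟨Or.inl hxB, fun h' =>
          h'.elim hxD (fun hxB' => hdisjBB'.le_bot ⟨hxB, hxB'⟩)⟩
    rw [e1, e2] at h
    exact h
  refine ⟨B' \ B'', B \ D, ⟨B, B', (isBase_restrict_iff hX).2 hB,
    (isBase_restrict_iff diff_subset).2 hB', diff_subset.trans subset_union_right, ?_⟩,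
    ⟨X \ D, (M.E \ X) \ B'', ?_, ?_, ?_, ?_⟩, hcount⟩
  · -- (B ∪ B') \ (B' \ B'') = J
    have : (B ∪ B') \ (B' \ B'') = B ∪ B'' := by
      ext x
      constructor
      · rintro ⟨hx | hx, hxn⟩
        · exact Or.inl hx
        · by_cases hxB'' : x ∈ B''
          · exact Or.inr hxB''
          · exact absurd ⟨hx, hxB''⟩ hxn
      · rintro (hx | hx)
        · exact ⟨Or.inl hx, fun h' => hdisjBB'.le_bot ⟨hx, h'.1⟩⟩
        · exact ⟨Or.inr (hB''B' hx), fun h' => h'.2 hx⟩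
    rw [this, ← hJeq]
    exact hJ
  · -- (M✶ ↾ X).IsBase (X \ D)
    refine (isBase_restrict_iff (X := X) (M := M✶) hX).2 ?_
    exact kd_dual_basis hX hB' hDX (hWeq ▸ hWbase)
  · -- (M✶ ↾ (M✶.E \ X)).IsBase ((M.E \ X) \ B'')
    have hgr : M✶.E \ X = M.E \ X := by rw [dual_ground]
    rw [hgr]
    refine (isBase_restrict_iff (X := M.E \ X) (M := M✶) diff_subset).2 ?_
    have hXc : M.IsBasis B (M.E \ (M.E \ X)) := by rwa [diff_diff_cancel_left hX]
    have hb : M.IsBase (B'' ∪ B) := by rwa [union_comm, ← hJeq]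
    exact kd_dual_basis diff_subset hXc hB''Y hb
  · -- B \ D ⊆ (X \ D) ∪ ((M.E \ X) \ B'')
    exact fun x hx => Or.inl ⟨hBX hx.1, hx.2⟩
  · -- M✶.IsBase (((X \ D) ∪ ((M.E \ X) \ B'')) \ (B \ D))
    have hset : ((X \ D) ∪ ((M.E \ X) \ B'')) \ (B \ D) = M.E \ J := by
      rw [hJeq]
      ext x
      constructor
      · rintro ⟨⟨hxX, hxD⟩ | ⟨⟨hxE, hxX⟩, hxB''⟩, hxn⟩
        · refine ⟨hX hxX, ?_⟩
          rintro (hxB | hxB'')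
          · exact hxn ⟨hxB, hxD⟩
          · exact (hB''Y hxB'').2 hxX
        · exact ⟨hxE, fun h' => h'.elim (fun hxB => hxX (hBX hxB)) hxB''⟩
      · rintro ⟨hxE, hxn⟩
        by_cases hxX : x ∈ X
        · refine ⟨Or.inl ⟨hxX, fun hxD => hxn (Or.inl (hDB hxD))⟩, ?_⟩
          rintro ⟨hxB, -⟩
          exact hxn (Or.inl hxB)
        · refine ⟨Or.inr ⟨⟨hxE, hxX⟩, fun h' => hxn (Or.inr h')⟩, ?_⟩
          rintro ⟨hxB, -⟩
          exact hxX (hBX hxB)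
    rw [hset, dual_isBase_iff diff_subset, diff_diff_cancel_left hJE]
    exact hJ

end KappaDualAux

/-- The connectivity function is invariant under duality:
`κ_M(X) = κ_{M✶}(X)` for any `X ⊆ E`. Concretely, if `F` arises in the definition of
`κ_M(X)` and `F₁` arises in the definition of `κ_{M✶}(X)`, then `F` is finite iff `F₁` is
finite, and in that case `|F| = |F₁|`. -/
theorem kappa_dual {α : Type*} (M : Matroid α) (X : Set α) (hX : X ⊆ M.E)
    (F F₁ : Set α) (hF : ConnWitness M X F) (hF₁ : ConnWitness M✶ X F₁) :
    (F.Finite ↔ F₁.Finite) ∧ (F.Finite → F.ncard = F₁.ncard) := by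
  obtain ⟨F₀, F₁', h0, h1, heq⟩ := kd_exists_pair M X hX
  have hXd : X ⊆ M✶.E := by rwa [Matroid.dual_ground]
  have hmain : F.encard = F₁.encard := by
    rw [kd_connWitness_encard_eq hX hF h0, heq, kd_connWitness_encard_eq hXd h1 hF₁]
  constructor
  · rw [← Set.encard_ne_top_iff, ← Set.encard_ne_top_iff, hmain]
  · intro _
    rw [Set.ncard_def, Set.ncard_def, hmain]
end
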